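/- arXiv:2605.01626 — 11 statements merged into one kernel-verified Lean document; each statement's English description precedes it below -/
import Mathlib

section
/- In a distributive binary G-space X, for every x ∈ X the stationary subgroup G_{(x,x)} = {g ∈ G : g(x,x) = x} is a normal subgroup of G. -/
def IsBinAct {G X : Type*} [Group G] (a : G → X → X → X) : Prop :=
  (∀ g h x y, a (g * h) x y = a g x (a h x y)) ∧ ∀ x y, a 1 x y = y

def IsDistribAct {G X : Type*} [Group G] (a : G → X → X → X) : Prop :=
  ∀ g h x y z, a g x (a h y z) = a h (a g x y) (a g x z)

def IsEffectiveAct {G X : Type*} [Group G] (a : G → X → X → X) : Prop :=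
  ∀ g, (∀ x y, a g x y = y) → g = 1

def IsSemitransAct {G X : Type*} [Group G] (a : G → X → X → X) : Prop :=
  (∀ g x, a g x x = x) ∧ ∀ x y : X, x ≠ y → Set.range (fun g => a g x y) = {x}ᶜ

/-!
For fixed `x`, `g ↦ a g x` is an ordinary action of `G` on `X`, so `G_{(x,y)}` is a stabilizer and
`G_{(x, g⁻¹(x,y))} = g⁻¹ G_{(x,y)} g`. Distributivity gives `h(x, g(x,x)) = g(h(x,x), h(x,x))`, so
every `h ∈ G_{(x,x)}` also fixes `g(x,x)` for every `g`; hence `G_{(x,x)}` contains its conjugates.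
-/

namespace IsBinAct

variable {G X : Type*} [Group G] {a : G → X → X → X}

theorem inv_apply_apply (ha : IsBinAct a) (g : G) (x y : X) : a g⁻¹ x (a g x y) = y := by
  rw [← ha.1, inv_mul_cancel, ha.2]

theorem apply_inv_apply (ha : IsBinAct a) (g : G) (x y : X) : a g x (a g⁻¹ x y) = y := by
  simpa using ha.inv_apply_apply g⁻¹ x y

def stationarySubgroup (ha : IsBinAct a) (x y : X) : Subgroup G where
  carrier := {g | a g x y = y}
  one_mem' := ha.2 x y
  mul_mem' {g h} (hg : a g x y = y) (hh : a h x y = y) := by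
    change a (g * h) x y = y
    rw [ha.1, hh, hg]
  inv_mem' {g} (hg : a g x y = y) := by
    change a g⁻¹ x y = y
    conv_lhs => rw [← hg]
    exact ha.inv_apply_apply g x y

theorem mem_stationarySubgroup (ha : IsBinAct a) {x y : X} {g : G} :
    g ∈ ha.stationarySubgroup x y ↔ a g x y = y :=
  Iff.rfl

theorem conj_mem_stationarySubgroup (ha : IsBinAct a) {x y : X} {g h : G}
    (hh : h ∈ ha.stationarySubgroup x (a g⁻¹ x y)) : g * h * g⁻¹ ∈ ha.stationarySubgroup x y := by
  rw [mem_stationarySubgroup] at hh ⊢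
  rw [ha.1, ha.1, hh, ha.apply_inv_apply]

theorem stationarySubgroup_self_normal (ha : IsBinAct a) (hd : IsDistribAct a) (x : X) :
    (ha.stationarySubgroup x x).Normal where
  conj_mem h hh g := by
    refine ha.conj_mem_stationarySubgroup ?_
    rw [mem_stationarySubgroup] at hh ⊢
    rw [hd, hh]

end IsBinAct

/-- In a distributive binary `G`-space, the stationary subgroup of a point is normal. -/
theorem stationary_subgroup_of_point_normal (G X : Type*) [Group G] (a : G → X → X → X)
    (ha : IsBinAct a) (hd : IsDistribAct a) (x : X) :
    ∃ H : Subgroup G, H.Normal ∧ (H : Set G) = {g : G | a g x x = x} :=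
  ⟨ha.stationarySubgroup x x, ha.stationarySubgroup_self_normal hd x, rfl⟩
end

section
/- Let H be a normal subgroup of a group G. The map g(kH, lH) = (k g k⁻¹ l)H is a well-defined binary action of G on the quotient G/H, which is distributive and transitive (i.e., for every coset c, G(c,c) = G/H). -/
/-- For a normal subgroup `H`, the map `g(kH, lH) = (k g k⁻¹ l)H` is a well-defined
binary action of `G` on `G ⧸ H`, distributive and transitive. -/
theorem quotient_binary_action (G : Type*) [Group G] (H : Subgroup G) [H.Normal] :
    ∃ b : G → G ⧸ H → G ⧸ H → G ⧸ H,
      (∀ g k l : G, b g (↑k) (↑l) = ((k * g * k⁻¹ * l : G) : G ⧸ H)) ∧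
      IsBinAct b ∧ IsDistribAct b ∧
      ∀ c : G ⧸ H, Set.range (fun g => b g c c) = Set.univ := by
  refine ⟨fun g x y => x * (g : G ⧸ H) * x⁻¹ * y, fun g k l => by
      simp [QuotientGroup.mk_mul], ⟨fun g h x y => by simp [mul_assoc], fun x y => by simp⟩,
    fun g h x y z => by group, fun c => ?_⟩
  ext d
  simp only [Set.mem_range, Set.mem_univ, iff_true]
  obtain ⟨g, hg⟩ := QuotientGroup.mk_surjective (c⁻¹ * d)
  exact ⟨g, by rw [hg]; group⟩
end

section
/- Let F be a field and G = F^× its multiplicative group. Then the map p(a,b) = (1−p)a + pb (for p ∈ G, a,b ∈ F) is a binary action of G on F which is distributive and semitransitive. -/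
/-- For a field `F` with multiplicative group `G = Fˣ`, the map `p(a,b) = (1-p)a + pb`
is a semitransitive distributive binary action of `G` on `F`. -/
theorem field_affine_binary_action (F : Type*) [Field F] :
    IsBinAct (fun (p : Fˣ) (a b : F) => (1 - (p : F)) * a + (p : F) * b) ∧
    IsDistribAct (fun (p : Fˣ) (a b : F) => (1 - (p : F)) * a + (p : F) * b) ∧
    IsSemitransAct (fun (p : Fˣ) (a b : F) => (1 - (p : F)) * a + (p : F) * b) := by
  refine ⟨⟨fun g h x y => by push_cast; ring, fun x y => by simp⟩,
    fun g h x y z => by push_cast; ring,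
    fun g x => by ring, fun x y hxy => ?_⟩
  ext z
  simp only [Set.mem_range, Set.mem_compl_iff, Set.mem_singleton_iff]
  constructor
  · rintro ⟨p, rfl⟩ h
    have hba : (y : F) - x ≠ 0 := sub_ne_zero.mpr (Ne.symm hxy)
    have : (p : F) * (y - x) = 0 := by linear_combination h
    rcases mul_eq_zero.mp this with h1 | h1
    · exact p.ne_zero h1
    · exact hba h1
  · intro hz
    have hba : (y : F) - x ≠ 0 := sub_ne_zero.mpr (Ne.symm hxy)
    refine ⟨Units.mk0 ((z - x) / (y - x)) ?_, ?_⟩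
    · exact div_ne_zero (sub_ne_zero.mpr hz) hba
    · simp only [Units.val_mk0]
      field_simp
      ring
end

section
/- Let X be an effective semitransitive distributive binary G-space. Then for any distinct points x, y ∈ X, the stationary subgroup G_{(x,y)} = {g ∈ G : g(x,y) = y} is trivial. -/
/-- In an effective semitransitive distributive binary `G`-space, the stationary subgroup
of any pair of distinct points is trivial. -/
theorem stationary_subgroup_of_distinct_pair_trivial (G X : Type*) [Group G]
    (a : G → X → X → X) (ha : IsBinAct a) (he : IsEffectiveAct a)
    (hd : IsDistribAct a) (hs : IsSemitransAct a) :
    ∀ x y : X, x ≠ y → ∀ g : G, a g x y = y → g = 1 := by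
  intro x y hxy g hg
  have hinv : ∀ (h : G) (p z : X), a h⁻¹ p (a h p z) = z := by
    intro h p z
    rw [← ha.1, inv_mul_cancel, ha.2]
  have step1 : ∀ (k : G) (p q : X), p ≠ q → a k p q = q → ∀ z, a k p z = z := by
    intro k p q hpq hk z
    by_cases hz : z = p
    · rw [hz]; exact hs.1 k p
    · have : z ∈ Set.range (fun g => a g p q) := by
        rw [hs.2 p q hpq]; exact hz
      obtain ⟨m, hm⟩ := this
      replace hm : a m p q = z := hm
      calc a k p z = a k p (a m p q) := by rw [hm]
        _ = a m (a k p p) (a k p q) := hd k m p p q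
        _ = a m p q := by rw [hs.1, hk]
        _ = z := hm
  have hx : ∀ z, a g x z = z := step1 g x y hxy hg
  have step2 : ∀ u, u ≠ y → ∀ v, a g u v = v := by
    intro u hu v
    have : u ∈ Set.range (fun k => a k y x) := by
      rw [hs.2 y x (Ne.symm hxy)]; exact hu
    obtain ⟨h, hh⟩ := this
    replace hh : a h y x = u := hh
    have hz : a h y (a h⁻¹ y v) = v := by
      rw [← ha.1, mul_inv_cancel, ha.2]
    calc a g u v = a g (a h y x) (a h y (a h⁻¹ y v)) := by rw [hh, hz]
      _ = a h y (a g x (a h⁻¹ y v)) := (hd h g y x (a h⁻¹ y v)).symm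
      _ = a h y (a h⁻¹ y v) := by rw [hx]
      _ = v := hz
  have hy : ∀ v, a g y v = v := by
    by_cases hyx : a g y x = x
    · exact step1 g y x (Ne.symm hxy) hyx
    · intro v
      have hu : a g y x ≠ y := by
        have : a g y x ∈ Set.range (fun k => a k y x) := ⟨g, rfl⟩
        rw [hs.2 y x (Ne.symm hxy)] at this
        exact this
      have : a g y x ∈ Set.range (fun k => a k x y) := by
        rw [hs.2 x y hxy]; exact hyx
      obtain ⟨h, hh⟩ := this
      replace hh : a h x y = a g y x := hh
      have key : a h x (a g y v) = a h x v := by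
        calc a h x (a g y v) = a g (a h x y) (a h x v) := hd h g x y v
          _ = a h x v := by rw [hh]; exact step2 _ hu _
      have := congrArg (a h⁻¹ x) key
      rwa [hinv, hinv] at this
  apply he
  intro u v
  by_cases hu : u = y
  · subst hu; exact hy v
  · exact step2 u hu v
end

section
/- Let X be an effective semitransitive distributive binary G-space with at least two points. Then the group G is abelian. -/
/-- An effective semitransitive distributive binary `G`-space with at least two points
forces `G` to be abelian. -/
theorem semitransitive_distributive_implies_abelian (G X : Type*) [Group G]
    [Nontrivial X] (a : G → X → X → X) (ha : IsBinAct a) (he : IsEffectiveAct a)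
    (hd : IsDistribAct a) (hs : IsSemitransAct a) :
    ∀ g h : G, g * h = h * g := by
  intro g h
  have key : ∀ x z : X, a (g * h) x z = a (h * g) x z := by
    intro x z
    rw [ha.1, ha.1]
    have h2 := hd g h x x z
    rwa [hs.1 g x] at h2
  have h1 : g * h * (h * g)⁻¹ = 1 := by
    apply he
    intro x y
    rw [ha.1, key, ← ha.1, mul_inv_cancel, ha.2]
  exact mul_inv_eq_one.mp h1
end

section
/- Let X be an effective semitransitive distributive binary G-space. Then the right distributivity law holds: g(h(x,y), z) = h(g(x,z), g(y,z)) for all g, h ∈ G and x, y, z ∈ X. -/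
/-- Right distributivity in an effective semitransitive distributive binary `G`-space. -/
theorem right_distributivity (G X : Type*) [Group G]
    (a : G → X → X → X) (ha : IsBinAct a) (he : IsEffectiveAct a)
    (hd : IsDistribAct a) (hs : IsSemitransAct a) :
    ∀ (g h : G) (x y z : X), a g (a h x y) z = a h (a g x z) (a g y z) := by
  obtain ⟨hmul, hone⟩ := ha
  obtain ⟨hfix, htrans⟩ := hs
  -- reachability: from x ≠ y, any w ≠ x is of the form a k x y
  have hreach : ∀ (x y w : X), x ≠ y → w ≠ x → ∃ k, a k x y = w := by
    intro x y w hxy hwx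
    have : w ∈ Set.range (fun g => a g x y) := by
      rw [htrans x y hxy]; exact hwx
    exact this
  -- injectivity in the last argument
  have hinj : ∀ (g : G) (x u v : X), a g x u = a g x v → u = v := by
    intro g x u v h
    have := congrArg (a g⁻¹ x) h
    rwa [← hmul, ← hmul, inv_mul_cancel, hone, hone] at this
  -- commutation of two operators with the same basepoint
  have comm : ∀ (g h : G) (x z : X), a g x (a h x z) = a h x (a g x z) := by
    intro g h x z
    calc a g x (a h x z) = a h (a g x x) (a g x z) := hd g h x x z
      _ = a h x (a g x z) := by rw [hfix]
  -- G is abelian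
  have gcomm : ∀ g h : G, g * h = h * g := by
    intro g h
    have h1 : ∀ x z : X, a ((h * g)⁻¹ * (g * h)) x z = z := by
      intro x z
      rw [hmul, hmul g h, comm g h, ← hmul, ← hmul, mul_assoc, inv_mul_cancel, hone]
    exact (inv_mul_eq_one.mp (he _ h1)).symm
  -- freeness: a fixed point other than the basepoint forces g = 1
  have free : ∀ (g : G) (w z : X), w ≠ z → a g w z = z → g = 1 := by
    intro g w z hwz hfz
    -- step A: a g w · is the identity
    have Kw : ∀ u, a g w u = u := by
      intro u
      by_cases hu : u = w
      · rw [hu, hfix]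
      · obtain ⟨k, hk⟩ := hreach w z u hwz hu
        rw [← hk, ← hmul, gcomm g k, hmul, hfz]
    -- step B: a g p · is the identity for every basepoint p
    have Kall : ∀ p q, a g p q = q := by
      intro p q
      by_cases hp : p = w
      · rw [hp]; exact Kw q
      · by_cases hu : ∃ u, u ≠ p ∧ u ≠ w
        · obtain ⟨u, hup, huw⟩ := hu
          obtain ⟨k, hk⟩ := hreach u w p huw (Ne.symm hup)
          have hq : a k u (a k⁻¹ u q) = q := by
            rw [← hmul, mul_inv_cancel, hone]
          calc a g p q = a g (a k u w) (a k u (a k⁻¹ u q)) := by rw [hk, hq]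
            _ = a k u (a g w (a k⁻¹ u q)) := (hd k g u w _).symm
            _ = a k u (a k⁻¹ u q) := by rw [Kw]
            _ = q := hq
        · -- X ⊆ {p, w}
          push_neg at hu
          have hzp : z = p := by
            by_contra hne
            exact hwz (hu z hne).symm
          by_cases hq : q = p
          · rw [hq, hfix]
          · have hqw : q = w := hu q hq
            rw [hqw]
            by_cases hvp : a g p w = p
            · exfalso
              have hwp : w = p := hinj g p w p (by rw [hvp, hfix])
              exact hwz (hwp.trans hzp.symm)
            · exact hu _ hvp
    exact he g Kall
  -- the theorem
  intro g h x y z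
  by_cases hg : g = 1
  · rw [hg, hone, hone, hone, hfix]
  · by_cases hex : ∃ w₀ : X, w₀ ≠ z
    · obtain ⟨w₀, hw₀⟩ := hex
      have hnz : a g w₀ z ≠ z := fun hcon => hg (free g w₀ z hw₀ hcon)
      obtain ⟨d, hdg⟩ := hreach z w₀ (a g w₀ z) (Ne.symm hw₀) hnz
      -- main lemma: a g w z = a d z w for ALL w
      have key : ∀ w, a g w z = a d z w := by
        intro w
        by_cases hw : w = z
        · rw [hw, hfix, hfix]
        · obtain ⟨k, hk⟩ := hreach z w₀ w (Ne.symm hw₀) hw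
          have h1 : a k z (a g w₀ z) = a g (a k z w₀) z := by
            have := hd k g z w₀ z
            rwa [hfix k z] at this
          rw [← hk, ← h1, ← hdg, ← hmul, ← hmul, gcomm k d]
      rw [key (a h x y), hd d h z x y, ← key x, ← key y]
    · push_neg at hex
      rw [hex (a h x y), hex (a g x z), hex (a g y z), hfix, hfix]
end

section
/- Let X be an effective semitransitive distributive binary G-space. Then the medial-type identity g(h(x,y), h(z,t)) = h(g(x,z), g(y,t)) holds for all g, h ∈ G and x, y, z, t ∈ X. -/
section Aux

variable {G X : Type*} [Group G] (a : G → X → X → X)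

private lemma act_cancel (ha : IsBinAct a) (g : G) (x w : X) :
    a g⁻¹ x (a g x w) = w := by
  rw [← ha.1, inv_mul_cancel, ha.2]

private lemma act_inj (ha : IsBinAct a) {g : G} {x u v : X} (h : a g x u = a g x v) :
    u = v := by
  have h2 := congrArg (a g⁻¹ x) h
  rwa [act_cancel a ha, act_cancel a ha] at h2

private lemma samebase (hd : IsDistribAct a) (hs : IsSemitransAct a)
    (g h : G) (x w : X) : a g x (a h x w) = a h x (a g x w) := by
  rw [hd g h x x w, hs.1 g x]

/-- For `g ≠ 1`, the "column" map `w ↦ a g w c` coincides with a pencil map at `c`. -/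
private lemma iota (ha : IsBinAct a) (he : IsEffectiveAct a) (hd : IsDistribAct a)
    (hs : IsSemitransAct a) (g : G) (c : X) (hg : g ≠ 1) :
    ∃ k : G, ∀ w, a g w c = a k c w := by
  by_cases hA : ∃ w₀, w₀ ≠ c ∧ a g w₀ c ≠ c
  · obtain ⟨w₀, hw₀, hphi⟩ := hA
    have hrange : Set.range (fun k => a k c w₀) = {c}ᶜ := hs.2 c w₀ (Ne.symm hw₀)
    have h1 : a g w₀ c ∈ Set.range (fun k => a k c w₀) := by
      rw [hrange]; exact Set.mem_compl_singleton_iff.mpr hphi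
    obtain ⟨k, hk⟩ := h1
    simp only at hk
    refine ⟨k, fun w => ?_⟩
    by_cases hw : w = c
    · subst hw; rw [hs.1, hs.1]
    · have h2 : w ∈ Set.range (fun k => a k c w₀) := by
        rw [hrange]; exact Set.mem_compl_singleton_iff.mpr hw
      obtain ⟨n, hn⟩ := h2
      simp only at hn
      calc a g w c = a g (a n c w₀) c := by rw [hn]
        _ = a g (a n c w₀) (a n c c) := by rw [hs.1]
        _ = a n c (a g w₀ c) := (hd n g c w₀ c).symm
        _ = a n c (a k c w₀) := by rw [hk]
        _ = a k c (a n c w₀) := samebase a hd hs n k c w₀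
        _ = a k c w := by rw [hn]
  · push_neg at hA
    exfalso
    have hB : ∀ w, a g w c = c := by
      intro w
      by_cases hw : w = c
      · rw [hw]; exact hs.1 g c
      · exact hA w hw
    apply hg
    apply he
    intro w c'
    by_cases hcc : c' = c
    · rw [hcc]; exact hB w
    · by_cases hb : ∃ b, b ≠ c ∧ b ≠ c'
      · obtain ⟨b, hbc, hbc'⟩ := hb
        have hr : Set.range (fun m => a m b c) = {b}ᶜ := hs.2 b c hbc
        have h3 : c' ∈ Set.range (fun m => a m b c) := by
          rw [hr]; exact Set.mem_compl_singleton_iff.mpr (Ne.symm hbc')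
        obtain ⟨m, hm⟩ := h3
        simp only at hm
        have hu : a m b (a m⁻¹ b w) = w := by rw [← ha.1, mul_inv_cancel, ha.2]
        calc a g w c' = a g (a m b (a m⁻¹ b w)) (a m b c) := by rw [hu, hm]
          _ = a m b (a g (a m⁻¹ b w) c) := (hd m g b _ c).symm
          _ = a m b c := by rw [hB]
          _ = c' := hm
      · push_neg at hb
        by_cases hwc : w = c
        · rw [hwc]
          by_cases hvc : a g c c' = c
          · exfalso
            apply hcc
            have h4 : a g c c' = a g c c := by rw [hvc, hs.1]
            exact act_inj a ha h4
          · exact hb (a g c c') hvc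
        · have hw' : w = c' := hb w hwc
          rw [hw']
          exact hs.1 g c'

/-- The medial identity in the case `y ≠ z`. -/
private lemma med_ne (ha : IsBinAct a) (he : IsEffectiveAct a) (hd : IsDistribAct a)
    (hs : IsSemitransAct a) (g h : G) (x y z t : X) (hyz : y ≠ z) :
    a g (a h x y) (a h z t) = a h (a g x z) (a g y t) := by
  by_cases hg : g = 1
  · subst hg; simp only [ha.2]
  by_cases hh : h = 1
  · subst hh; simp only [ha.2]
  obtain ⟨k, hk⟩ := iota a ha he hd hs g z hg
  obtain ⟨k', hk'⟩ := iota a ha he hd hs h y hh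
  have eqz : a g (a h x y) z = a h (a g x z) (a g y z) := by
    rw [hk (a h x y), hd k h z x y, ← hk x, ← hk y]
  have eqy : a g (a h x y) (a h z y) = a h (a g x z) y := by
    rw [hk' x, hk' z, ← hd k' g y x z, ← hk' (a g x z)]
  by_cases ht : t = y
  · subst ht
    rw [hs.1]
    exact eqy
  · have h5 : t ∈ Set.range (fun n => a n y z) := by
      rw [hs.2 y z hyz]; exact Set.mem_compl_singleton_iff.mpr ht
    obtain ⟨n, hn⟩ := h5
    simp only at hn
    rw [← hn]
    calc a g (a h x y) (a h z (a n y z))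
        = a g (a h x y) (a n (a h z y) (a h z z)) := by rw [hd h n z y z]
      _ = a g (a h x y) (a n (a h z y) z) := by rw [hs.1]
      _ = a n (a g (a h x y) (a h z y)) (a g (a h x y) z) := by
          rw [hd g n (a h x y) (a h z y) z]
      _ = a n (a h (a g x z) y) (a h (a g x z) (a g y z)) := by rw [eqy, eqz]
      _ = a h (a g x z) (a n y (a g y z)) := (hd h n (a g x z) y (a g y z)).symm
      _ = a h (a g x z) (a n (a g y y) (a g y z)) := by rw [hs.1]
      _ = a h (a g x z) (a g y (a n y z)) := (congrArg _ (hd g n y y z)).symm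

end Aux

/-- Medial-type identity in an effective semitransitive distributive binary `G`-space. -/
theorem medial_identity (G X : Type*) [Group G]
    (a : G → X → X → X) (ha : IsBinAct a) (he : IsEffectiveAct a)
    (hd : IsDistribAct a) (hs : IsSemitransAct a) :
    ∀ (g h : G) (x y z t : X),
      a g (a h x y) (a h z t) = a h (a g x z) (a g y t) := by
  intro g h x y z t
  by_cases hyz : y = z
  · subst hyz
    -- goal : a g (a h x y) (a h y t) = a h (a g x y) (a g y t)
    by_cases h1 : a h x y = y
    · by_cases h2 : a g x y = y
      · rw [h1, h2]
        exact samebase a hd hs g h y t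
      · -- use h = (h * g⁻¹) * g and the `y ≠ z` case
        have e1 : a h x y = a (h * g⁻¹) x (a g x y) := by
          rw [← ha.1, inv_mul_cancel_right]
        have e2 : a h y t = a (h * g⁻¹) y (a g y t) := by
          rw [← ha.1, inv_mul_cancel_right]
        have e3 : a h (a g x y) (a g y t)
            = a (h * g⁻¹) (a g x y) (a g (a g x y) (a g y t)) := by
          rw [← ha.1, inv_mul_cancel_right]
        rw [e3, e1, e2,
          med_ne a ha he hd hs g (h * g⁻¹) x (a g x y) y (a g y t) h2]
    · -- use g = (g * h⁻¹) * h and the `y ≠ z` case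
      have f1 : a g x y = a (g * h⁻¹) x (a h x y) := by
        rw [← ha.1, inv_mul_cancel_right]
      have f2 : a g y t = a (g * h⁻¹) y (a h y t) := by
        rw [← ha.1, inv_mul_cancel_right]
      have f3 : a g (a h x y) (a h y t)
          = a (g * h⁻¹) (a h x y) (a h (a h x y) (a h y t)) := by
        rw [← ha.1, inv_mul_cancel_right]
      rw [f3, f1, f2,
        med_ne a ha he hd hs h (g * h⁻¹) x (a h x y) y (a h y t) h1]
  · exact med_ne a ha he hd hs g h x y z t hyz
end

section
/- Let X be an effective semitransitive distributive binary G-space with at least two points. Then X admits a field structure such that G is isomorphic to the multiplicative group of this field and the binary action is given by g(x,y) = (1−p)x + py, where p is the field element corresponding to g. -/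
/-- A field structure on `X` together with an isomorphism of `G` with `Xˣ` realizing the
binary action as `g(x,y) = (1 - p)x + p y`, where `p` corresponds to `g`. -/
structure FieldActionModel (G X : Type*) [Group G] (a : G → X → X → X) where
  [fieldX : Field X]
  iso : G ≃* Xˣ
  compat : ∀ (g : G) (x y : X), a g x y = (1 - ((iso g : Xˣ) : X)) * x + ((iso g : Xˣ) : X) * y

/-!
Fix `0 ≠ 1` in `X`. The map `g ↦ a g 0 1` is a bijection from `G` onto `X \ {0}`, and
distributivity with equal centers makes `G` commutative, so `X` becomes a commutative group with zero
in which each dilation `a g 0` is multiplication by some `φ g`.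

Distributivity says that every dilation `a g x` is an automorphism of the action, and by
semitransitivity an automorphism is determined by its values at two points. Fix an automorphism `J`
exchanging `0` and `1` (it will be `y ↦ 1 - y`). Identities between composites of `J` and
multiplications can then be checked at `0` and `1`. This gives `J (J u * w) = u * J (J u⁻¹ * J w)`,
from which `-1` is found and `x + y := x * J (-(y / x))` is seen to be commutative. Addition is
associative because the translations `x + ·` are again automorphisms. Finally
`a g x y = x * J (φ g * J (y / x)) = (1 - φ g) x + φ g y`.
-/

def IsActHom {G X : Type*} (a : G → X → X → X) (F : X → X) : Prop :=
  ∀ g u v, F (a g u v) = a g (F u) (F v)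

section BinaryAction

variable {G X : Type*} {a : G → X → X → X}

theorem IsActHom.id : IsActHom a id :=
  fun _ _ _ => rfl

theorem IsActHom.comp {F F' : X → X} (hF : IsActHom a F) (hF' : IsActHom a F') :
    IsActHom a (F ∘ F') :=
  fun g u v => by rw [Function.comp_apply, hF', hF]; rfl

variable [Group G]

theorem IsBinAct.apply_inv_apply_s16 (ha : IsBinAct a) (g : G) (x y : X) :
    a g x (a g⁻¹ x y) = y := by
  rw [← ha.1, mul_inv_cancel, ha.2]

theorem IsBinAct.injective (ha : IsBinAct a) (g : G) (x : X) : Function.Injective (a g x) :=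
  fun y y' h => by rw [← ha.2 x y, ← ha.2 x y', ← inv_mul_cancel g, ha.1, ha.1, h]

theorem IsBinAct.surjective (ha : IsBinAct a) (g : G) (x : X) : Function.Surjective (a g x) :=
  fun y => ⟨_, ha.apply_inv_apply_s16 g x y⟩

theorem apply_eq_center_iff (ha : IsBinAct a) (hs : IsSemitransAct a) {g : G} {x y : X} :
    a g x y = x ↔ y = x :=
  ⟨fun h => ha.injective g x (h.trans (hs.1 g x).symm), fun h => h ▸ hs.1 g x⟩

theorem IsSemitransAct.exists_apply_eq (hs : IsSemitransAct a) {x y w : X} (hxy : x ≠ y)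
    (hw : w ≠ x) : ∃ g, a g x y = w := by
  have : w ∈ Set.range fun g => a g x y := by rw [hs.2 x y hxy]; exact hw
  exact this

theorem IsDistribAct.isActHom (hd : IsDistribAct a) (g : G) (x : X) : IsActHom a (a g x) :=
  fun h u v => hd g h x u v

theorem IsSemitransAct.actHom_ext (hs : IsSemitransAct a) {F F' : X → X} (hF : IsActHom a F)
    (hF' : IsActHom a F') {u v : X} (huv : u ≠ v) (hu : F u = F' u) (hv : F v = F' v) :
    F = F' := by
  funext y
  by_cases hy : y = u
  · rw [hy, hu]
  obtain ⟨g, rfl⟩ := hs.exists_apply_eq huv hy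
  rw [hF, hF', hu, hv]

theorem IsDistribAct.mul_comm (ha : IsBinAct a) (hd : IsDistribAct a) (he : IsEffectiveAct a)
    (hs : IsSemitransAct a) (g h : G) : g * h = h * g := by
  have hcomm : ∀ x y, a (g * h) x y = a (h * g) x y := by
    intro x y
    rw [ha.1, ha.1, hd, hs.1]
  refine mul_inv_eq_one.mp (he _ fun x y => ?_)
  rw [ha.1, hcomm, ha.apply_inv_apply_s16]

theorem eq_one_of_apply_eq_self (ha : IsBinAct a) (hd : IsDistribAct a) (he : IsEffectiveAct a)
    (hs : IsSemitransAct a) {k : G} {x y : X} (hxy : x ≠ y) (h : a k x y = y) : k = 1 := by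
  have hx : a k x = id :=
    hs.actHom_ext (hd.isActHom k x) (fun _ _ _ => rfl) hxy (hs.1 k x) h
  -- automorphisms conjugate dilations with the same `k`, so `a k w` is trivial at `w = a g u x`
  have hconj : ∀ g u v, a k (a g u x) v = v := by
    intro g u v
    obtain ⟨v, rfl⟩ := ha.surjective g u v
    rw [← hd, hx, id]
  refine he k fun u v => ?_
  by_cases hw : ∃ w, w ≠ u ∧ w ≠ x
  · obtain ⟨w, hwu, hwx⟩ := hw
    obtain ⟨g, rfl⟩ := hs.exists_apply_eq hwx hwu.symm
    exact hconj g w v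
  · push Not at hw
    by_cases hvu : v = u
    · rw [hvu, hs.1]
    by_cases hux : u = x
    · rw [hux, hx, id]
    rw [hw v hvu]
    exact (hw _ fun h' => hux ((apply_eq_center_iff ha hs).mp h').symm)

theorem apply_left_injective (ha : IsBinAct a) (hd : IsDistribAct a) (he : IsEffectiveAct a)
    (hs : IsSemitransAct a) {x y : X} (hxy : x ≠ y) : Function.Injective fun g => a g x y := by
  intro g h hgh
  have : a (h⁻¹ * g) x y = y := by
    simp only at hgh
    rw [ha.1, hgh, ← ha.1, inv_mul_cancel, ha.2]
  exact (inv_mul_eq_one.mp (eq_one_of_apply_eq_self ha hd he hs hxy this)).symm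

end BinaryAction

protected abbrev Equiv.commGroupWithZero {α β : Type*} (e : α ≃ β) [CommGroupWithZero β] :
    CommGroupWithZero α := by
  let _ := e.zero
  let _ := e.one
  let _ := e.mul
  let _ := e.Inv
  let _ := e.div
  let _ := e.pow ℕ
  let _ := e.pow ℤ
  apply e.injective.commGroupWithZero _ <;> intros <;> exact e.apply_symm_apply _

section MultiplicativeStructure

variable {G X : Type*} [Group G] {a : G → X → X → X}

noncomputable def orbitEquiv (ha : IsBinAct a) (hd : IsDistribAct a) (he : IsEffectiveAct a)
    (hs : IsSemitransAct a) {z o : X} (hzo : z ≠ o) : G ≃ {x // x ≠ z} :=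
  Equiv.ofBijective (fun g => ⟨a g z o, fun h => hzo ((apply_eq_center_iff ha hs).mp h).symm⟩)
    ⟨fun _ _ hgh => apply_left_injective ha hd he hs hzo (congrArg Subtype.val hgh),
     fun w => (hs.exists_apply_eq hzo w.2).imp fun _ hg => Subtype.ext hg⟩

theorem exists_commGroupWithZero [Nontrivial X] (ha : IsBinAct a) (hd : IsDistribAct a)
    (he : IsEffectiveAct a) (hs : IsSemitransAct a) :
    ∃ (_ : CommGroupWithZero X) (φ : G → X), ∀ g y, a g 0 y = φ g * y := by
  classical
  obtain ⟨z, o, hzo⟩ := exists_pair_ne X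
  let : CommGroup G := { ‹Group G› with mul_comm := hd.mul_comm ha he hs }
  let ψ := orbitEquiv ha hd he hs hzo
  let e : X ≃ WithZero G := (Equiv.optionSubtypeNe z).symm.trans (Equiv.optionCongr ψ.symm)
  have hz : e.symm 0 = z := rfl
  have hlabel : ∀ h : G, e.symm h = a h z o := fun _ => rfl
  refine ⟨e.commGroupWithZero, fun g => e.symm g, fun g y => ?_⟩
  obtain ⟨w, rfl⟩ := e.symm.surjective y
  simp only [Equiv.mul_def, Equiv.zero_def, Equiv.apply_symm_apply]
  cases w with
  | zero => rw [mul_zero, hz, hs.1]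
  | coe h => rw [← WithZero.coe_mul, hlabel, hlabel, hz, ha.1]

end MultiplicativeStructure

section Coordinates

variable {G X : Type*} [Group G] [CommGroupWithZero X] {a : G → X → X → X} {φ : G → X}

theorem isActHom_mul_left (hd : IsDistribAct a) (hs : IsSemitransAct a)
    (hφ : ∀ g y, a g 0 y = φ g * y) (c : X) : IsActHom a (c * ·) := by
  by_cases hc : c = 0
  · intro g u v
    simp only [hc, zero_mul, hs.1]
  obtain ⟨g, rfl⟩ := hs.exists_apply_eq zero_ne_one hc
  have hmul : (a g 0 1 * ·) = a g 0 := funext fun y => by rw [hφ, hφ, mul_one]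
  rw [hmul]
  exact hd.isActHom g 0

theorem apply_eq_mul_apply_one (hd : IsDistribAct a) (hs : IsSemitransAct a)
    (hφ : ∀ g y, a g 0 y = φ g * y) (g : G) {x : X} (hx : x ≠ 0) (y : X) :
    a g x y = x * a g 1 (x⁻¹ * y) := by
  have h := isActHom_mul_left hd hs hφ x g 1 (x⁻¹ * y)
  simp only [mul_one, mul_inv_cancel_left₀ hx] at h
  exact h.symm

noncomputable def unitsEquiv (ha : IsBinAct a) (hd : IsDistribAct a) (he : IsEffectiveAct a)
    (hs : IsSemitransAct a) (hφ : ∀ g y, a g 0 y = φ g * y) : G ≃* Xˣ :=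
  have hφ1 (g : G) : a g 0 1 = φ g := by rw [hφ, mul_one]
  have hφ0 (g : G) : φ g ≠ 0 := by
    rw [← hφ1, Ne, apply_eq_center_iff ha hs]
    exact one_ne_zero
  let f : G →* Xˣ :=
    { toFun g := Units.mk0 (φ g) (hφ0 g)
      map_one' := Units.ext (by rw [Units.val_mk0, ← hφ1, ha.2, Units.val_one])
      map_mul' g h := Units.ext (by
        rw [Units.val_mk0, Units.val_mul, Units.val_mk0, Units.val_mk0, ← hφ1, ha.1, hφ1, hφ]) }
  MulEquiv.ofBijective f
    ⟨fun g h hgh => apply_left_injective ha hd he hs zero_ne_one (by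
        simp only [hφ1]
        exact congrArg Units.val hgh),
     fun u => (hs.exists_apply_eq zero_ne_one u.ne_zero).imp fun g hg =>
        Units.ext (by rw [← hg, hφ1]; rfl)⟩

/-- In the field, `J y = 1 - y`. -/
def IsUnitSwap (a : G → X → X → X) (J : X → X) : Prop :=
  IsActHom a J ∧ J 0 = 1 ∧ J 1 = 0

/-- In the field, `μ = -1`; the second condition says `1 + t = t * (1 + t⁻¹)`. -/
def IsNegOne (J : X → X) (μ : X) : Prop :=
  μ * μ = 1 ∧ ∀ t ≠ 0, J (μ * t) = t * J (μ * t⁻¹)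

theorem exists_isUnitSwap (ha : IsBinAct a) (hd : IsDistribAct a) (hs : IsSemitransAct a)
    {p : X} (hp0 : p ≠ 0) (hp1 : p ≠ 1) : ∃ J, IsUnitSwap a J := by
  obtain ⟨g, hg⟩ := hs.exists_apply_eq hp0 hp1.symm
  have hg1 : 1 ≠ a g p 1 := fun h => zero_ne_one (ha.injective g p (hg.trans h))
  obtain ⟨h, hh⟩ := hs.exists_apply_eq hg1 zero_ne_one
  exact ⟨a h 1 ∘ a g p, (hd.isActHom h 1).comp (hd.isActHom g p),
    by rw [Function.comp_apply, hg, hs.1], hh⟩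

namespace IsUnitSwap

variable {J : X → X}

theorem apply_apply (hs : IsSemitransAct a) (hJ : IsUnitSwap a J) (y : X) : J (J y) = y :=
  congrFun (hs.actHom_ext (hJ.1.comp hJ.1) IsActHom.id zero_ne_one (by simp [hJ.2.1, hJ.2.2])
    (by simp [hJ.2.1, hJ.2.2])) y

theorem injective (hs : IsSemitransAct a) (hJ : IsUnitSwap a J) : Function.Injective J :=
  Function.LeftInverse.injective (hJ.apply_apply hs)

theorem apply_eq_zero_iff (hs : IsSemitransAct a) (hJ : IsUnitSwap a J) {y : X} :
    J y = 0 ↔ y = 1 := by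
  rw [← hJ.2.2, (hJ.injective hs).eq_iff]

theorem apply_ne_zero (hs : IsSemitransAct a) (hJ : IsUnitSwap a J) {y : X} (hy : y ≠ 1) :
    J y ≠ 0 :=
  mt (hJ.apply_eq_zero_iff hs).mp hy

theorem apply_one (hs : IsSemitransAct a) (hφ : ∀ g y, a g 0 y = φ g * y)
    (hJ : IsUnitSwap a J) (g : G) (y : X) : a g 1 y = J (φ g * J y) := by
  rw [← hφ, hJ.1, hJ.2.1, hJ.apply_apply hs]

theorem apply_mul_apply (hd : IsDistribAct a) (hs : IsSemitransAct a)
    (hφ : ∀ g y, a g 0 y = φ g * y) (hJ : IsUnitSwap a J) {u : X} (hu : u ≠ 0) (w : X) :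
    J (J u * w) = u * J (J u⁻¹ * J w) := by
  have hmul := isActHom_mul_left hd hs hφ
  refine congrFun (hs.actHom_ext (F := fun w => J (J u * w))
    (F' := fun w => u * J (J u⁻¹ * J w)) (hJ.1.comp (hmul _))
    (((hmul u).comp hJ.1).comp ((hmul _).comp hJ.1)) zero_ne_one ?_ ?_) w
  · simp only [mul_zero, hJ.2.1, mul_one, hJ.apply_apply hs, mul_inv_cancel₀ hu]
  · simp only [mul_one, hJ.apply_apply hs, hJ.2.2, mul_zero, hJ.2.1]

theorem apply_inv_apply_s16 (hd : IsDistribAct a) (hs : IsSemitransAct a)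
    (hφ : ∀ g y, a g 0 y = φ g * y) (hJ : IsUnitSwap a J) {u : X} (hu0 : u ≠ 0) (hu1 : u ≠ 1) :
    J (J u)⁻¹ = (J u⁻¹)⁻¹ := by
  have h := hJ.apply_mul_apply hd hs hφ hu0 (J u)⁻¹
  rw [mul_inv_cancel₀ (hJ.apply_ne_zero hs hu1), hJ.2.2, eq_comm,
    mul_eq_zero_iff_left hu0, hJ.apply_eq_zero_iff hs] at h
  exact (inv_eq_of_mul_eq_one_right h).symm

theorem apply_mul (hd : IsDistribAct a) (hs : IsSemitransAct a)
    (hφ : ∀ g y, a g 0 y = φ g * y) (hJ : IsUnitSwap a J) {u : X} (hu0 : u ≠ 0) (hu1 : u ≠ 1)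
    (w : X) : J (u * w) = J u * J ((J u⁻¹)⁻¹ * J w) := by
  have h := hJ.apply_mul_apply hd hs hφ (hJ.apply_ne_zero hs hu1) w
  rwa [hJ.apply_apply hs, hJ.apply_inv_apply_s16 hd hs hφ hu0 hu1] at h

/-- In the field, both sides are `-(u * v)`. -/
theorem apply_mul_div_apply_inv (hd : IsDistribAct a) (hs : IsSemitransAct a)
    (hφ : ∀ g y, a g 0 y = φ g * y) (hJ : IsUnitSwap a J) {u v : X} (hu0 : u ≠ 0) (hu1 : u ≠ 1)
    (hv : v ≠ 0) (huv : u * v ≠ 1) :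
    J (u * v) / J (u * v)⁻¹ = v * (J u / J u⁻¹) := by
  have hu0' : u⁻¹ ≠ 0 := inv_ne_zero hu0
  have hu1' : u⁻¹ ≠ 1 := inv_ne_one.mpr hu1
  have hB : J ((J u)⁻¹ * J v⁻¹) ≠ 0 := by
    rw [Ne, hJ.apply_eq_zero_iff hs, inv_mul_eq_one₀ (hJ.apply_ne_zero hs hu1),
      (hJ.injective hs).eq_iff]
    intro h
    exact huv (by rw [h, inv_mul_cancel₀ hv])
  have hA : J ((J u⁻¹)⁻¹ * J v) = v * J ((J u)⁻¹ * J v⁻¹) := by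
    rw [mul_comm, hJ.apply_mul_apply hd hs hφ hv, hJ.apply_inv_apply_s16 hd hs hφ hu0' hu1', inv_inv,
      mul_comm (J v⁻¹)]
  rw [hJ.apply_mul hd hs hφ hu0 hu1, mul_inv, hJ.apply_mul hd hs hφ hu0' hu1', inv_inv, hA,
    ← mul_assoc, mul_comm (J u) v, mul_div_mul_right _ _ hB, mul_div_assoc]

theorem exists_isNegOne (hd : IsDistribAct a) (hs : IsSemitransAct a)
    (hφ : ∀ g y, a g 0 y = φ g * y) (hJ : IsUnitSwap a J) {p : X} (hp0 : p ≠ 0) (hp1 : p ≠ 1) :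
    ∃ μ, IsNegOne J μ := by
  have hneg : ∀ t, t ≠ 0 → t ≠ 1 → J t / J t⁻¹ = J p / J p⁻¹ / p * t := by
    intro t ht0 ht1
    have h := hJ.apply_mul_div_apply_inv hd hs hφ hp0 hp1 (div_ne_zero ht0 hp0)
      (by rwa [mul_div_cancel₀ _ hp0])
    rwa [mul_div_cancel₀ _ hp0, div_mul_comm] at h
  refine ⟨J p / J p⁻¹ / p, ?_, fun t ht0 => ?_⟩
  · have h := hneg p⁻¹ (inv_ne_zero hp0) (inv_ne_one.mpr hp1)
    rw [inv_inv] at h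
    have hJp : J p⁻¹ ≠ 0 := hJ.apply_ne_zero hs (inv_ne_one.mpr hp1)
    calc _ = (J p / J p⁻¹ / p * p) * (J p / J p⁻¹ / p * p⁻¹) := by
          rw [mul_mul_mul_comm, mul_inv_cancel₀ hp0, mul_one]
      _ = 1 := by
          rw [← hneg p hp0 hp1, ← h, div_mul_div_cancel₀' (hJ.apply_ne_zero hs hp1), div_self hJp]
  by_cases ht1 : t = 1
  · rw [ht1, inv_one, one_mul]
  rw [← hneg t ht0 ht1, ← hneg t⁻¹ (inv_ne_zero ht0) (inv_ne_one.mpr ht1), inv_inv,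
    div_eq_mul_inv, hJ.apply_mul_apply hd hs hφ ht0,
    hJ.apply_inv_apply_s16 hd hs hφ (inv_ne_zero ht0) (inv_ne_one.mpr ht1), inv_inv, div_eq_mul_inv]

end IsUnitSwap

end Coordinates

section Addition

variable {G X : Type*} [Group G] [CommGroupWithZero X] {a : G → X → X → X} {φ : G → X}
  {J : X → X} {μ : X}

open Classical in
/-- `x + y = x * (1 + y / x)`, with `1 + z` written as `J (μ * z)`. -/
noncomputable def swapAdd (J : X → X) (μ : X) (x y : X) : X :=
  if x = 0 then y else x * J (μ * (x⁻¹ * y))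

theorem swapAdd_zero_left (y : X) : swapAdd J μ 0 y = y :=
  if_pos rfl

theorem swapAdd_of_ne_zero {x : X} (hx : x ≠ 0) (y : X) :
    swapAdd J μ x y = x * J (μ * (x⁻¹ * y)) :=
  if_neg hx

theorem swapAdd_zero_right (hJ0 : J 0 = 1) (x : X) : swapAdd J μ x 0 = x := by
  by_cases hx : x = 0
  · rw [hx, swapAdd_zero_left]
  · rw [swapAdd_of_ne_zero hx, mul_zero, mul_zero, hJ0, mul_one]

theorem mul_swapAdd (c x y : X) : c * swapAdd J μ x y = swapAdd J μ (c * x) (c * y) := by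
  by_cases hc : c = 0
  · rw [hc, zero_mul, zero_mul, zero_mul, swapAdd_zero_left]
  by_cases hx : x = 0
  · rw [hx, mul_zero, swapAdd_zero_left, swapAdd_zero_left]
  rw [swapAdd_of_ne_zero hx, swapAdd_of_ne_zero (mul_ne_zero hc hx), mul_inv,
    mul_mul_mul_comm, inv_mul_cancel₀ hc, one_mul, mul_assoc]

theorem swapAdd_mul_self (hJ1 : J 1 = 0) (hμ : μ * μ = 1) (x : X) :
    swapAdd J μ x (μ * x) = 0 := by
  by_cases hx : x = 0
  · rw [hx, mul_zero, swapAdd_zero_left]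
  rw [swapAdd_of_ne_zero hx, mul_left_comm x⁻¹, ← mul_assoc, hμ, one_mul, inv_mul_cancel₀ hx, hJ1,
    mul_zero]

theorem swapAdd_comm (hJ0 : J 0 = 1) (hμ : IsNegOne J μ) (x y : X) :
    swapAdd J μ x y = swapAdd J μ y x := by
  by_cases hx : x = 0
  · rw [hx, swapAdd_zero_left, swapAdd_zero_right hJ0]
  by_cases hy : y = 0
  · rw [hy, swapAdd_zero_left, swapAdd_zero_right hJ0]
  rw [swapAdd_of_ne_zero hx, swapAdd_of_ne_zero hy, hμ.2 _ (mul_ne_zero (inv_ne_zero hx) hy),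
    mul_inv, inv_inv, ← mul_assoc, mul_inv_cancel_left₀ hx, mul_comm y⁻¹]

theorem isActHom_swapAdd (hd : IsDistribAct a) (hs : IsSemitransAct a)
    (hφ : ∀ g y, a g 0 y = φ g * y) (hJ : IsActHom a J) (x : X) :
    IsActHom a (swapAdd J μ x) := by
  by_cases hx : x = 0
  · rw [hx, show swapAdd J μ 0 = id from funext swapAdd_zero_left]
    exact IsActHom.id
  have hmul := isActHom_mul_left hd hs hφ
  rw [show swapAdd J μ x = (x * ·) ∘ J ∘ (μ * ·) ∘ (x⁻¹ * ·) from
    funext (swapAdd_of_ne_zero hx)]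
  exact (hmul x).comp (hJ.comp ((hmul μ).comp (hmul x⁻¹)))

theorem swapAdd_neg_swapAdd (hd : IsDistribAct a) (hs : IsSemitransAct a)
    (hφ : ∀ g y, a g 0 y = φ g * y) (hJ : IsUnitSwap a J) (hμ : IsNegOne J μ) (x y : X) :
    swapAdd J μ x (swapAdd J μ (μ * x) y) = y := by
  by_cases hx : x = 0
  · rw [hx, mul_zero, swapAdd_zero_left, swapAdd_zero_left]
  have hadd := isActHom_swapAdd (μ := μ) hd hs hφ hJ.1
  refine congrFun (hs.actHom_ext ((hadd x).comp (hadd (μ * x))) IsActHom.id (Ne.symm hx) ?_ ?_) y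
  · simp only [Function.comp_apply, swapAdd_zero_right hJ.2.1, swapAdd_mul_self hJ.2.2 hμ.1, id]
  · simp only [Function.comp_apply, swapAdd_comm hJ.2.1 hμ _ x, swapAdd_mul_self hJ.2.2 hμ.1,
      swapAdd_zero_right hJ.2.1, id]

theorem swapAdd_assoc (hd : IsDistribAct a) (hs : IsSemitransAct a)
    (hφ : ∀ g y, a g 0 y = φ g * y) (hJ : IsUnitSwap a J) (hμ : IsNegOne J μ) (x y w : X) :
    swapAdd J μ (swapAdd J μ x y) w = swapAdd J μ x (swapAdd J μ y w) := by
  by_cases hy : y = 0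
  · rw [hy, swapAdd_zero_right hJ.2.1, swapAdd_zero_left]
  have hμ0 : μ ≠ 0 := left_ne_zero_of_mul_eq_one hμ.1
  have hadd := isActHom_swapAdd (μ := μ) hd hs hφ hJ.1
  -- both sides are automorphisms in `w` sending `0 ↦ x + y` and `-y ↦ x`
  refine congrFun (hs.actHom_ext (hadd _) ((hadd x).comp (hadd y))
    (mul_ne_zero hμ0 hy).symm ?_ ?_) w
  · simp only [Function.comp_apply, swapAdd_zero_right hJ.2.1]
  · have h := swapAdd_neg_swapAdd hd hs hφ hJ hμ (μ * y) x
    rw [← mul_assoc, hμ.1, one_mul] at h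
    rw [Function.comp_apply, swapAdd_comm hJ.2.1 hμ (swapAdd J μ x y), swapAdd_comm hJ.2.1 hμ x y,
      h, swapAdd_mul_self hJ.2.2 hμ.1, swapAdd_zero_right hJ.2.1]

noncomputable abbrev swapField (hd : IsDistribAct a) (hs : IsSemitransAct a)
    (hφ : ∀ g y, a g 0 y = φ g * y) (hJ : IsUnitSwap a J) (hμ : IsNegOne J μ) : Field X :=
  letI : Add X := ⟨swapAdd J μ⟩
  letI : Neg X := ⟨(μ * ·)⟩
  { ‹CommGroupWithZero X› with
    add_assoc := swapAdd_assoc hd hs hφ hJ hμ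
    zero_add := swapAdd_zero_left
    add_zero := swapAdd_zero_right hJ.2.1
    add_comm := swapAdd_comm hJ.2.1 hμ
    neg_add_cancel := fun x => (swapAdd_comm hJ.2.1 hμ _ _).trans (swapAdd_mul_self hJ.2.2 hμ.1 x)
    nsmul := nsmulRec
    zsmul := zsmulRec
    left_distrib := mul_swapAdd
    right_distrib := fun x y c => by
      simp only [mul_comm _ c]
      exact mul_swapAdd c x y
    nnqsmul := _
    qsmul := _ }

end Addition

section Model

variable {G X : Type*} [Group G] [CommGroupWithZero X] {a : G → X → X → X} {φ : G → X}

theorem exists_isUnitSwap_isNegOne (ha : IsBinAct a) (hd : IsDistribAct a)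
    (hs : IsSemitransAct a) (hφ : ∀ g y, a g 0 y = φ g * y) :
    ∃ J μ, IsUnitSwap a J ∧ IsNegOne J μ := by
  by_cases h3 : ∃ p : X, p ≠ 0 ∧ p ≠ 1
  · obtain ⟨p, hp0, hp1⟩ := h3
    obtain ⟨J, hJ⟩ := exists_isUnitSwap ha hd hs hp0 hp1
    obtain ⟨μ, hμ⟩ := hJ.exists_isNegOne hd hs hφ hp0 hp1
    exact ⟨J, μ, hJ, hμ⟩
  -- `X = {0, 1}`: the action is trivial and `J` is the transposition
  push Not at h3
  classical
  have htriv : ∀ g u v, a g u v = v := by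
    intro g u v
    by_cases hvu : v = u
    · rw [hvu, hs.1]
    have hne : a g u v ≠ u := fun h => hvu ((apply_eq_center_iff ha hs).mp h)
    have h01 (w : X) : w = 0 ∨ w = 1 := or_iff_not_imp_left.mpr (h3 w)
    grind [h01 u, h01 v, h01 (a g u v)]
  refine ⟨fun y => if y = 0 then 1 else 0, 1, ⟨fun g u v => by simp only [htriv], by simp, by simp⟩,
    one_mul 1, fun t ht => ?_⟩
  rw [h3 t ht, inv_one, one_mul, one_mul]

theorem nonempty_fieldActionModel (ha : IsBinAct a) (hd : IsDistribAct a) (he : IsEffectiveAct a)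
    (hs : IsSemitransAct a) (hφ : ∀ g y, a g 0 y = φ g * y) {J : X → X} {μ : X}
    (hJ : IsUnitSwap a J) (hμ : IsNegOne J μ) : Nonempty (FieldActionModel G X a) := by
  let _ := swapField hd hs hφ hJ hμ
  have hsub (y : X) : 1 - y = J y := by
    rw [sub_eq_add_neg]
    change swapAdd J μ 1 (μ * y) = J y
    rw [swapAdd_of_ne_zero one_ne_zero, inv_one, one_mul, one_mul, ← mul_assoc, hμ.1, one_mul]
  refine ⟨{ iso := unitsEquiv ha hd he hs hφ, compat := fun g x y => ?_ }⟩
  change a g x y = (1 - φ g) * x + φ g * y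
  by_cases hx : x = 0
  · rw [hx, hφ, mul_zero, zero_add]
  rw [apply_eq_mul_apply_one hd hs hφ g hx, hJ.apply_one hs hφ, ← hsub, ← hsub]
  field_simp
  ring

end Model

/-- Every effective semitransitive distributive binary `G`-space with at least two points
carries a field structure with multiplicative group `G` realizing the action. -/
theorem semitransitive_distributive_field_structure (G X : Type*) [Group G]
    [Nontrivial X] (a : G → X → X → X) (ha : IsBinAct a) (he : IsEffectiveAct a)
    (hd : IsDistribAct a) (hs : IsSemitransAct a) :
    Nonempty (FieldActionModel G X a) := by
  obtain ⟨_, φ, hφ⟩ := exists_commGroupWithZero ha hd he hs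
  obtain ⟨J, μ, hJ, hμ⟩ := exists_isUnitSwap_isNegOne ha hd hs hφ
  exact nonempty_fieldActionModel ha hd he hs hφ hJ hμ
end

section
/- Let G be a finite group admitting an effective semitransitive distributive binary action on a set X with at least two points. Then |X| = p^n for some prime p and natural number n ≥ 1. -/
/-!
Distributivity says exactly that every map `a g x` is an automorphism of `(X, a)`, and
semitransitivity makes the group of these automorphisms sharply 2-transitive as soon as
`|X| = n ≥ 3`: an automorphism fixing `x` and `y ≠ x` fixes every `a g x y`, hence all of `X`.

In a finite sharply 2-transitive group, Burnside's lemma leaves room for at most `n - 1`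
fixed-point-free elements, while a point stabilizer (of order `n - 1`) conjugates any one of
them into `n - 1` distinct ones; so they form a single conjugacy class. For a prime `q ∣ n`,
Cauchy gives an element of order `q`, which cannot fix a point since `q ∤ n - 1`. Hence all
primes dividing `n` are orders of conjugate elements, so they coincide.
-/

open MulAction

structure IsSharplyTwoTransitive (A X : Type*) [Group A] [MulAction A X] : Prop where
  exists_smul_eq_smul_eq {x y x' y' : X} : x ≠ y → x' ≠ y' → ∃ α : A, α • x = x' ∧ α • y = y'
  eq_one_of_smul_eq_smul_eq {α : A} {x y : X} : x ≠ y → α • x = x → α • y = y → α = 1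

namespace IsSharplyTwoTransitive

variable {A X : Type*} [Group A] [MulAction A X]

theorem isPretransitive [Nontrivial X] (h : IsSharplyTwoTransitive A X) :
    IsPretransitive A X := by
  refine ⟨fun x x' => ?_⟩
  obtain ⟨y, hy⟩ := exists_ne x
  obtain ⟨y', hy'⟩ := exists_ne x'
  obtain ⟨α, hα, -⟩ := h.exists_smul_eq_smul_eq hy.symm hy'.symm
  exact ⟨α, hα⟩

theorem subsingleton_fixedBy (h : IsSharplyTwoTransitive A X) {α : A} (hα : α ≠ 1) :
    (fixedBy X α).Subsingleton :=
  fun _ hx _ hy => by_contra fun hxy => hα (h.eq_one_of_smul_eq_smul_eq hxy hx hy)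

theorem card_fixedPointFree_le [Finite A] [Finite X] [Nontrivial X]
    (h : IsSharplyTwoTransitive A X) :
    Nat.card {α : A // ∀ x : X, α • x ≠ x} ≤ Nat.card X - 1 := by
  classical
  have := Fintype.ofFinite A
  obtain ⟨_⟩ := (pretransitive_iff_unique_quotient_of_nonempty A X).mp h.isPretransitive
  have hburnside : ∑ α : A, Nat.card (fixedBy X α) = Nat.card A := by
    rw [← Nat.card_sigma, Nat.card_congr (sigmaFixedByEquivOrbitsProdGroup A X), Nat.card_prod,
      Nat.card_unique, one_mul]
  -- The identity fixes `n` points and every other element at most one.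
  have hpoint (α : A) : Nat.card (fixedBy X α) + (if α = 1 then 1 else 0) ≤
      (if α = 1 then Nat.card X else 0) + (if ∀ x : X, α • x ≠ x then 0 else 1) := by
    by_cases hα : α = 1
    · subst hα
      simp [fixedBy]
    · rw [if_neg hα, if_neg hα, zero_add, add_zero]
      split_ifs with hfree
      · simp [fixedBy, hfree]
      · exact Finite.card_le_one_iff_subsingleton.mpr (h.subsingleton_fixedBy hα).coe_sort
  have hsum := Finset.sum_le_sum fun α (_ : α ∈ Finset.univ) => hpoint α
  simp only [Finset.sum_add_distrib, hburnside, Finset.sum_ite_eq', Finset.mem_univ, if_true,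
    Finset.sum_ite, Finset.sum_const_zero, Finset.sum_const, smul_eq_mul, mul_one, zero_add,
    Nat.card_eq_fintype_card] at hsum
  have hsplit := Finset.card_filter_add_card_filter_not (s := Finset.univ)
    (fun α : A => ∀ x : X, α • x ≠ x)
  rw [Nat.card_eq_fintype_card, Fintype.card_subtype]
  rw [Finset.card_univ] at hsplit
  omega

theorem eq_of_smul_eq_of_smul_eq (h : IsSharplyTwoTransitive A X) {x y : X} (hxy : x ≠ y)
    {β γ : A} (hx : β • x = γ • x) (hy : β • y = γ • y) : β = γ := by
  refine (inv_mul_eq_one.mp (h.eq_one_of_smul_eq_smul_eq hxy ?_ ?_)).symm <;>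
    rwa [mul_smul, inv_smul_eq_iff]

theorem card_stabilizer [Finite X] [Nontrivial X] (h : IsSharplyTwoTransitive A X) (x : X) :
    Nat.card (stabilizer A x) = Nat.card X - 1 := by
  classical
  have := Fintype.ofFinite X
  obtain ⟨y, hy⟩ := exists_ne x
  let f : stabilizer A x → {z : X // z ≠ x} := fun β =>
    ⟨(β : A) • y, fun hβy => hy (smul_left_cancel (β : A) (hβy.trans β.2.symm))⟩
  have hf : Function.Bijective f := by
    refine ⟨fun β γ hβγ => ?_, fun ⟨z, hz⟩ => ?_⟩
    · exact Subtype.ext (h.eq_of_smul_eq_of_smul_eq hy.symm (β.2.trans γ.2.symm)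
        (congrArg Subtype.val hβγ))
    · obtain ⟨α, hαx, hαy⟩ := h.exists_smul_eq_smul_eq hy.symm hz.symm
      exact ⟨⟨α, hαx⟩, Subtype.ext hαy⟩
  rw [Nat.card_congr (Equiv.ofBijective f hf)]
  simp [Nat.card_eq_fintype_card, Fintype.card_subtype_compl]

theorem isConj_of_fixedPointFree [Finite A] [Finite X] [Nontrivial X]
    (h : IsSharplyTwoTransitive A X) {σ τ : A} (hσ : ∀ x : X, σ • x ≠ x)
    (hτ : ∀ x : X, τ • x ≠ x) : IsConj σ τ := by
  obtain ⟨x⟩ : Nonempty X := inferInstance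
  let f : stabilizer A x → {ρ : A // ∀ z : X, ρ • z ≠ z} := fun β =>
    ⟨β * σ * (β : A)⁻¹, fun z hz => hσ ((β : A)⁻¹ • z) (by
      rwa [mul_smul, mul_smul, smul_eq_iff_eq_inv_smul] at hz)⟩
  have hf : Function.Injective f := by
    intro β γ hβγ
    have hβγx : (β : A) • σ • x = (γ : A) • σ • x := by
      have := congrArg (fun ρ => ρ.1 • x) hβγ
      simpa [f, mul_smul, inv_smul_eq_iff.mpr β.2.symm, inv_smul_eq_iff.mpr γ.2.symm] using this
    exact Subtype.ext (h.eq_of_smul_eq_of_smul_eq (hσ x).symm (β.2.trans γ.2.symm) hβγx)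
  obtain ⟨β, hβ⟩ := (hf.bijective_of_nat_card_le (by
    rw [h.card_stabilizer]; exact h.card_fixedPointFree_le)).2 ⟨τ, hτ⟩
  exact isConj_iff.mpr ⟨β, congrArg Subtype.val hβ⟩

theorem fixedPointFree_of_orderOf_eq_prime [Finite X] [Nontrivial X]
    (h : IsSharplyTwoTransitive A X) {q : ℕ} (hq : q.Prime) (hqX : q ∣ Nat.card X) {α : A}
    (hα : orderOf α = q) (x : X) : α • x ≠ x := by
  intro hx
  have hqstab : q ∣ Nat.card X - 1 := by
    rw [← h.card_stabilizer x, ← hα, ← Subgroup.orderOf_mk (H := stabilizer A x) α hx]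
    exact orderOf_dvd_natCard _
  have hX : 0 < Nat.card X := Nat.card_pos
  exact hq.one_lt.ne' (Nat.dvd_one.mp (by simpa [Nat.sub_sub_self hX] using Nat.dvd_sub hqX hqstab))

theorem isPrimePow_card [Finite A] [Finite X] [Nontrivial X] (h : IsSharplyTwoTransitive A X) :
    IsPrimePow (Nat.card X) := by
  have := h.isPretransitive
  obtain ⟨x⟩ : Nonempty X := inferInstance
  have hXA : Nat.card X ∣ Nat.card A :=
    index_stabilizer_of_transitive A x ▸ (stabilizer A x).index_dvd_card
  have hcauchy (q : ℕ) (hq : q.Prime) (hqX : q ∣ Nat.card X) :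
      ∃ α : A, orderOf α = q ∧ ∀ x : X, α • x ≠ x := by
    have := Fact.mk hq
    obtain ⟨α, hα⟩ := exists_prime_orderOf_dvd_card' q (hqX.trans hXA)
    exact ⟨α, hα, h.fixedPointFree_of_orderOf_eq_prime hq hqX hα⟩
  have hunique (q r : ℕ) (hq : q.Prime) (hqX : q ∣ Nat.card X) (hr : r.Prime)
      (hrX : r ∣ Nat.card X) : q = r := by
    obtain ⟨σ, rfl, hσ⟩ := hcauchy q hq hqX
    obtain ⟨τ, rfl, hτ⟩ := hcauchy r hr hrX
    obtain ⟨c, hc⟩ := h.isConj_of_fixedPointFree hσ hτ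
    exact hc.orderOf_eq
  have hp := Nat.minFac_prime (Finite.one_lt_card (α := X)).ne'
  exact isPrimePow_iff_unique_prime_dvd.mpr ⟨_, ⟨hp, Nat.minFac_dvd _⟩,
    fun q ⟨hq, hqX⟩ => hunique q _ hq hqX hp (Nat.minFac_dvd _)⟩

end IsSharplyTwoTransitive

theorem exists_ne_ne_of_two_lt_card {X : Type*} [Finite X] (h : 2 < Nat.card X) (u v : X) :
    ∃ w, w ≠ u ∧ w ≠ v := by
  have := Fintype.ofFinite X
  rw [Nat.card_eq_fintype_card, Fintype.two_lt_card_iff] at h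
  obtain ⟨a, b, c, hab, hac, hbc⟩ := h
  by_contra! hw
  have huv (w : X) : w = u ∨ w = v := or_iff_not_imp_left.2 (hw w)
  rcases huv a with rfl | rfl <;> rcases huv b with rfl | rfl <;> rcases huv c with rfl | rfl <;>
    simp_all

section BinaryAction

variable {G X : Type*} {a : G → X → X → X}

variable (a) in
def binActAut : Subgroup (Equiv.Perm X) where
  carrier := {α | ∀ g x y, α (a g x y) = a g (α x) (α y)}
  mul_mem' {α β} hα hβ g x y := by
    rw [Equiv.Perm.mul_apply, Equiv.Perm.mul_apply, hβ g x y, hα]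
    rfl
  one_mem' _ _ _ := rfl
  inv_mem' {α} hα g x y := α.injective (by rw [hα]; simp)

variable [Group G]

theorem IsSemitransAct.finite [Finite G] (hs : IsSemitransAct a) : Finite X := by
  rcases subsingleton_or_nontrivial X with hX | hX
  · infer_instance
  obtain ⟨x, y, hxy⟩ := exists_pair_ne X
  have hcompl : ({x}ᶜ : Set X).Finite := hs.2 x y hxy ▸ Set.finite_range _
  exact Set.finite_univ_iff.mp (Set.union_compl_self {x} ▸ (Set.finite_singleton x).union hcompl)

def IsBinAct.toPerm (ha : IsBinAct a) (g : G) (x : X) : Equiv.Perm X where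
  toFun := a g x
  invFun := a g⁻¹ x
  left_inv y := by rw [← ha.1, inv_mul_cancel, ha.2]
  right_inv y := by rw [← ha.1, mul_inv_cancel, ha.2]

theorem IsDistribAct.toPerm_mem_binActAut (hd : IsDistribAct a) (ha : IsBinAct a) (g : G)
    (x : X) : ha.toPerm g x ∈ binActAut a :=
  fun h y z => hd g h x y z

theorem IsSemitransAct.eq_one_of_mem_binActAut (hs : IsSemitransAct a) {α : Equiv.Perm X}
    (hα : α ∈ binActAut a) {x y : X} (hxy : x ≠ y) (hx : α x = x) (hy : α y = y) : α = 1 := by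
  ext z
  rcases eq_or_ne z x with rfl | hzx
  · exact hx
  · obtain ⟨g, rfl⟩ : z ∈ Set.range fun g => a g x y := hs.2 x y hxy ▸ hzx
    simp [hα g x y, hx, hy]

theorem exists_mem_binActAut_apply_eq (ha : IsBinAct a) (hd : IsDistribAct a)
    (hs : IsSemitransAct a) (h3 : ∀ u v : X, ∃ w, w ≠ u ∧ w ≠ v) (u v : X) :
    ∃ α ∈ binActAut a, α u = v := by
  rcases eq_or_ne u v with rfl | huv
  · exact ⟨1, one_mem _, rfl⟩
  obtain ⟨w, hwu, hwv⟩ := h3 u v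
  obtain ⟨g, hg⟩ : v ∈ Set.range fun g => a g w u := hs.2 w u hwu ▸ hwv.symm
  exact ⟨ha.toPerm g w, hd.toPerm_mem_binActAut ha g w, hg⟩

theorem isSharplyTwoTransitive_binActAut (ha : IsBinAct a) (hd : IsDistribAct a)
    (hs : IsSemitransAct a) (h3 : ∀ u v : X, ∃ w, w ≠ u ∧ w ≠ v) :
    IsSharplyTwoTransitive (binActAut a) X where
  exists_smul_eq_smul_eq {x y x' y'} hxy hxy' := by
    obtain ⟨β, hβ, hβx⟩ := exists_mem_binActAut_apply_eq ha hd hs h3 x x'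
    have hβy : β y ≠ x' := hβx ▸ β.injective.ne hxy.symm
    obtain ⟨k, hk⟩ : y' ∈ Set.range fun k => a k x' (β y) := hs.2 x' (β y) hβy.symm ▸ hxy'.symm
    refine ⟨⟨ha.toPerm k x' * β, mul_mem (hd.toPerm_mem_binActAut ha k x') hβ⟩, ?_, hk⟩
    show a k x' (β x) = x'
    rw [hβx, hs.1]
  eq_one_of_smul_eq_smul_eq {α x y} hxy hx hy :=
    Subtype.ext (hs.eq_one_of_mem_binActAut α.2 hxy hx hy)

end BinaryAction

theorem card_eq_prime_pow_of_semitransitive_distributive_general (G X : Type*) [Group G]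
    [Finite G] [Nontrivial X] (a : G → X → X → X) (ha : IsBinAct a)
    (hd : IsDistribAct a) (hs : IsSemitransAct a) :
    ∃ (p n : ℕ), p.Prime ∧ 1 ≤ n ∧ Nat.card X = p ^ n := by
  have := hs.finite
  have hX : IsPrimePow (Nat.card X) := by
    rcases Nat.lt_or_ge 2 (Nat.card X) with h3 | h2
    · exact (isSharplyTwoTransitive_binActAut ha hd hs
        (exists_ne_ne_of_two_lt_card h3)).isPrimePow_card
    · rw [le_antisymm h2 Finite.one_lt_card]
      exact Nat.prime_two.isPrimePow
  obtain ⟨p, n, hp, hn, hpn⟩ := (isPrimePow_nat_iff _).mp hX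
  exact ⟨p, n, hp, hn, hpn.symm⟩

/-- If a finite group acts effectively, semitransitively and distributively on a set `X`
with at least two points, then `|X|` is a prime power. -/
theorem card_eq_prime_pow_of_semitransitive_distributive (G X : Type*) [Group G]
    [Finite G] [Nontrivial X] (a : G → X → X → X) (ha : IsBinAct a)
    (he : IsEffectiveAct a) (hd : IsDistribAct a) (hs : IsSemitransAct a) :
    ∃ (p n : ℕ), p.Prime ∧ 1 ≤ n ∧ Nat.card X = p ^ n :=
  card_eq_prime_pow_of_semitransitive_distributive_general G X a ha hd hs
end

section
/- A group G is isomorphic to the multiplicative group of some field if and only if there exists a set X with at least two points and an effective semitransitive distributive binary action of G on X. -/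
/-!
In the model `a g x y = x + g * (y - x)` on a field, the field is recovered as follows.
Distributivity makes every `a g x` an automorphism of the action. Using these, one shows that
`a g x y = a k y x` for some `k`, hence that maps `a g c` and `a k d` with `g ≠ k` always meet,
hence that `a g c ∘ a k d` has a fixed point when `g * k ≠ 1`. Consequently, for any centre `w`
and any `g ≠ 1`, each fixed-point-free automorphism is `a g⁻¹ w ∘ a g y` for some `y`; writing
`s` and `t⁻¹` in this form shows that `s * t` is the identity as soon as it fixes a point. So the
translations (the automorphisms that are the identity or fixed-point free) form a group acting
simply transitively on `X`. Fixing `o ≠ e` in `X`, the map `g ↦ a g o e` identifies `X` with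
`G ∪ {0}`, and evaluation at `o` identifies the translations with `X`; the addition comes from
the translations, the multiplication from `G`, and distributivity holds because `a g o`
conjugates translations to translations.
-/

open Equiv

namespace IsBinAct

variable {G X : Type*} [Group G] {a : G → X → X → X} (hB : IsBinAct a)
include hB

theorem act_act_inv (g : G) (x y : X) : a g x (a g⁻¹ x y) = y := by
  rw [← hB.1, mul_inv_cancel, hB.2]

theorem act_inv_act (g : G) (x y : X) : a g⁻¹ x (a g x y) = y := by
  rw [← hB.1, inv_mul_cancel, hB.2]

theorem act_injective (g : G) (x : X) : Function.Injective (a g x) :=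
  Function.LeftInverse.injective (hB.act_inv_act g x)

def perm (g : G) (x : X) : Perm X :=
  ⟨a g x, a g⁻¹ x, hB.act_inv_act g x, hB.act_act_inv g x⟩

@[simp]
theorem perm_apply (g : G) (x y : X) : hB.perm g x y = a g x y := rfl

@[simp]
theorem perm_inv_apply (g : G) (x y : X) : (hB.perm g x)⁻¹ y = a g⁻¹ x y := rfl

end IsBinAct

namespace IsSemitransAct

theorem exists_act_eq {G X : Type*} [Group G] {a : G → X → X → X} (hS : IsSemitransAct a)
    {x y z : X} (hxy : x ≠ y) (hzx : z ≠ x) : ∃ g, a g x y = z := by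
  have hz : z ∈ ({x}ᶜ : Set X) := hzx
  rwa [← hS.2 x y hxy] at hz

theorem act_ne {G X : Type*} [Group G] {a : G → X → X → X} (hS : IsSemitransAct a)
    {x y : X} (g : G) (hxy : x ≠ y) : a g x y ≠ x := by
  have hg : a g x y ∈ Set.range (fun g => a g x y) := ⟨g, rfl⟩
  rwa [hS.2 x y hxy] at hg

end IsSemitransAct

def autSubgroup {G X : Type*} [Group G] (a : G → X → X → X) : Subgroup (Perm X) where
  carrier := {f | ∀ g p z, f (a g p z) = a g (f p) (f z)}
  one_mem' _ _ _ := rfl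
  mul_mem' {f₁ f₂} h₁ h₂ g p z := by
    simp only [Perm.mul_apply, h₂ g p z, h₁ g]
  inv_mem' {f} hf g p z := by
    rw [Perm.inv_eq_iff_eq, hf]
    simp

theorem IsDistribAct.perm_mem_autSubgroup {G X : Type*} [Group G] {a : G → X → X → X}
    (hD : IsDistribAct a) (hB : IsBinAct a) (g : G) (x : X) : hB.perm g x ∈ autSubgroup a :=
  fun k p z => hD g k x p z

/-- The model is `a g x y = x + g * (y - x)` on a field whose group of units is `G`. -/
structure IsAffineBinAct {G X : Type*} [Group G] (a : G → X → X → X) : Prop where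
  bin : IsBinAct a
  effective : IsEffectiveAct a
  distrib : IsDistribAct a
  semitrans : IsSemitransAct a

namespace IsAffineBinAct

variable {G X : Type*} [Group G] {a : G → X → X → X} (h : IsAffineBinAct a)
include h

theorem eq_one_of_act_eq {g : G} {x y : X} (hxy : x ≠ y) (hg : a g x y = y) : g = 1 := by
  have hS := h.semitrans
  -- `a g x` fixes `x` and `y`, hence every `a k y x` by distributivity, i.e. everything.
  have hfix : ∀ z, a g x z = z := by
    intro z
    by_cases hz : z = y
    · rwa [hz]
    obtain ⟨k, rfl⟩ := hS.exists_act_eq (Ne.symm hxy) hz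
    rw [h.distrib, hg, hS.1]
  refine h.effective g fun w z => ?_
  by_cases hwx : w = x
  · rw [hwx, hfix]
  by_cases hv : ∃ v, v ≠ w ∧ v ≠ x
  · -- conjugate by a map centred at `v` sending `w` to `x`
    obtain ⟨v, hvw, hvx⟩ := hv
    obtain ⟨k, hk⟩ := hS.exists_act_eq hvw (Ne.symm hvx)
    apply h.bin.act_injective k v
    rw [h.distrib, hk, hfix]
  · -- here `X = {w, x}`
    push Not at hv
    by_cases hzw : z = w
    · rw [hzw, hS.1]
    rw [hv z hzw]
    exact hv _ (hS.act_ne g hwx)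

theorem eq_of_act_eq {g k : G} {x y : X} (hxy : x ≠ y) (hgk : a g x y = a k x y) : g = k := by
  have : a (k⁻¹ * g) x y = y := by rw [h.bin.1, hgk, h.bin.act_inv_act]
  rw [← inv_mul_eq_one.mp (h.eq_one_of_act_eq hxy this)]

variable [Nontrivial X]

theorem mul_comm (g k : G) : g * k = k * g := by
  obtain ⟨o, e, hoe⟩ := exists_pair_ne X
  refine h.eq_of_act_eq hoe ?_
  rw [h.bin.1, h.distrib, h.semitrans.1, ← h.bin.1]

theorem act_center_bijective {g : G} (hg : g ≠ 1) (p : X) :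
    Function.Bijective (fun u => a g u p) := by
  have hS := h.semitrans
  obtain ⟨q, hq⟩ := exists_ne p
  have hgq : p ≠ a g q p := fun h0 => hg (h.eq_one_of_act_eq hq h0.symm)
  have key : ∀ m, a g (a m p q) p = a m p (a g q p) := fun m => by
    rw [h.distrib, hS.1]
  have hp : ∀ u, a g u p = p → u = p := fun u hu => by
    by_contra hup
    exact hg (h.eq_one_of_act_eq hup hu)
  constructor
  · intro u v huv
    dsimp only at huv
    by_cases hu : u = p
    · rw [hu, hS.1] at huv
      rw [hu, hp v huv.symm]
    by_cases hv : v = p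
    · rw [hv, hS.1] at huv
      rw [hv, hp u huv]
    obtain ⟨m, rfl⟩ := hS.exists_act_eq (Ne.symm hq) hu
    obtain ⟨n, rfl⟩ := hS.exists_act_eq (Ne.symm hq) hv
    rw [key, key] at huv
    rw [h.eq_of_act_eq hgq huv]
  · intro t
    by_cases ht : t = p
    · exact ⟨p, by simp only [hS.1, ht]⟩
    obtain ⟨m, rfl⟩ := hS.exists_act_eq hgq ht
    exact ⟨a m p q, key m⟩

theorem exists_eq_act_of_mem_autSubgroup {f : Perm X} (hf : f ∈ autSubgroup a) {p : X}
    (hp : f p = p) : ∃ l, ∀ z, f z = a l p z := by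
  have hS := h.semitrans
  obtain ⟨q, hq⟩ := exists_ne p
  obtain ⟨l, hl⟩ :=
    hS.exists_act_eq (Ne.symm hq) (fun h0 => hq (f.injective (h0.trans hp.symm)))
  refine ⟨l, fun z => ?_⟩
  by_cases hz : z = p
  · rw [hz, hp, hS.1]
  obtain ⟨k, rfl⟩ := hS.exists_act_eq (Ne.symm hq) hz
  rw [hf, hp, ← hl, ← h.bin.1, h.mul_comm, h.bin.1]

theorem exists_ne_ne [Nontrivial G] (p q : X) : ∃ c, c ≠ p ∧ c ≠ q := by
  by_cases hpq : p = q
  · obtain ⟨c, hc⟩ := exists_ne p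
    exact ⟨c, hc, hpq ▸ hc⟩
  obtain ⟨g, hg⟩ := exists_ne (1 : G)
  exact ⟨a g p q, h.semitrans.act_ne g hpq, fun h0 => hg (h.eq_one_of_act_eq hpq h0)⟩

theorem exists_mem_autSubgroup_apply_eq [Nontrivial G] {o e x y : X} (hoe : o ≠ e)
    (hxy : x ≠ y) : ∃ f ∈ autSubgroup a, f o = x ∧ f e = y := by
  have hS := h.semitrans
  have hP := h.distrib.perm_mem_autSubgroup h.bin
  by_cases hx : x = o
  · obtain ⟨l, hl⟩ := hS.exists_act_eq hoe (hx ▸ Ne.symm hxy)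
    exact ⟨h.bin.perm l o, hP l o, by simp [hS.1, hx], hl⟩
  obtain ⟨c, hco, hcx⟩ := h.exists_ne_ne o x
  obtain ⟨k, hk⟩ := hS.exists_act_eq hco (Ne.symm hcx)
  have hke : a k c e ≠ x := hk ▸ fun h0 => hoe (h.bin.act_injective k c h0).symm
  obtain ⟨l, hl⟩ := hS.exists_act_eq (Ne.symm hke) (Ne.symm hxy)
  exact ⟨h.bin.perm l x * h.bin.perm k c, mul_mem (hP l x) (hP k c),
    by simp [hk, hS.1], by simp [hl]⟩

/-- In the model, `k = 1 - g`. -/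
theorem exists_act_swap {g : G} (hg : g ≠ 1) : ∃ k, ∀ x y, a g x y = a k y x := by
  have : Nontrivial G := ⟨⟨g, 1, hg⟩⟩
  obtain ⟨o, e, hoe⟩ := exists_pair_ne X
  obtain ⟨k, hk⟩ := h.semitrans.exists_act_eq (Ne.symm hoe)
    (fun h0 => hg (h.eq_one_of_act_eq hoe h0))
  refine ⟨k, fun x y => ?_⟩
  by_cases hxy : x = y
  · rw [hxy, h.semitrans.1, h.semitrans.1]
  obtain ⟨f, hf, rfl, rfl⟩ := h.exists_mem_autSubgroup_apply_eq hoe hxy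
  rw [← hf, ← hk, hf]

theorem exists_act_eq_act {g k : G} (hgk : g ≠ k) (c d : X) : ∃ z, a g c z = a k d z := by
  have hS := h.semitrans
  by_cases hg : g = 1
  · exact ⟨d, by rw [hg, h.bin.2, hS.1]⟩
  by_cases hk : k = 1
  · exact ⟨c, by rw [hk, h.bin.2, hS.1]⟩
  obtain ⟨g', hg'⟩ := h.exists_act_swap hg
  obtain ⟨k', hk'⟩ := h.exists_act_swap hk
  obtain ⟨q, hq⟩ := exists_ne c
  have hne : k'⁻¹ * g' ≠ 1 := fun h0 => hgk <| h.eq_of_act_eq (Ne.symm hq)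
    (by rw [hg', hk', inv_mul_eq_one.mp h0])
  obtain ⟨z, hz⟩ := (h.act_center_bijective hne c).2 d
  dsimp only at hz
  refine ⟨z, ?_⟩
  rw [hg', hk', ← hz, h.bin.1, h.bin.act_act_inv]

theorem exists_act_act_eq_self {g k : G} (hgk : g * k ≠ 1) (c d : X) :
    ∃ z, a g c (a k d z) = z := by
  obtain ⟨z, hz⟩ := h.exists_act_eq_act (g := g⁻¹) (k := k)
    (fun h0 => hgk (by rw [← h0, mul_inv_cancel])) c d
  exact ⟨z, by rw [← hz, h.bin.act_act_inv]⟩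

theorem eq_of_act_inv_act_eq_self {g : G} (hg : g ≠ 1) {c d z : X}
    (hz : a g⁻¹ c (a g d z) = z) : c = d := by
  refine (h.act_center_bijective hg z).1 ?_
  calc a g c z = a g c (a g⁻¹ c (a g d z)) := by rw [hz]
    _ = a g d z := h.bin.act_act_inv g c _

theorem eq_act_inv_act_of_fixedPointFree {s : Perm X} (hs : s ∈ autSubgroup a)
    (hfree : ∀ x, s x ≠ x) {g : G} {w z : X} (hz : a g w (s z) = z) :
    ∀ x, s x = a g⁻¹ w (a g z x) := by
  obtain ⟨l, hl⟩ := h.exists_eq_act_of_mem_autSubgroup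
    (mul_mem (h.distrib.perm_mem_autSubgroup h.bin g w) hs) (p := z) hz
  have hs' : ∀ x, s x = a g⁻¹ w (a l z x) := fun x => by
    rw [← hl, Perm.mul_apply, IsBinAct.perm_apply, h.bin.act_inv_act]
  by_cases hgl : g⁻¹ * l = 1
  · rwa [← inv_mul_eq_one.mp hgl] at hs'
  obtain ⟨y, hy⟩ := h.exists_act_act_eq_self hgl w z
  exact absurd (hs' y ▸ hy) (hfree y)

theorem exists_eq_act_inv_act [Nontrivial G] {s : Perm X} (hs : s ∈ autSubgroup a)
    (hfree : ∀ x, s x ≠ x) (w : X) {g : G} (hg : g ≠ 1) :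
    ∃ y, ∀ x, s x = a g⁻¹ w (a g y x) := by
  obtain ⟨z, hzw, hz⟩ := h.exists_ne_ne w (s⁻¹ w)
  obtain ⟨k, hk⟩ := h.semitrans.exists_act_eq (x := w) (y := s z) (z := z)
    (fun h0 => hz (by rw [h0]; simp)) hzw
  have hs' := h.eq_act_inv_act_of_fixedPointFree hs hfree hk
  obtain ⟨y, hy⟩ := h.exists_act_act_eq_self (g := g * k⁻¹) (k := k) (by simpa) w z
  refine ⟨y, h.eq_act_inv_act_of_fixedPointFree hs hfree ?_⟩
  rwa [hs', ← h.bin.1]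

theorem mul_eq_one_of_fixedPointFree [Nontrivial G] {s t : Perm X} (hs : s ∈ autSubgroup a)
    (ht : t ∈ autSubgroup a) (hsfree : ∀ x, s x ≠ x) (htfree : ∀ x, t x ≠ x) {w : X}
    (hw : s (t w) = w) : s * t = 1 := by
  obtain ⟨g, hg⟩ := exists_ne (1 : G)
  obtain ⟨y, hy⟩ := h.exists_eq_act_inv_act hs hsfree w hg
  obtain ⟨y', hy'⟩ := h.exists_eq_act_inv_act (inv_mem ht)
    (fun x hx => htfree x (Perm.inv_eq_iff_eq.mp hx).symm) w hg
  have ht' : ∀ x, t x = a g⁻¹ y' (a g w x) := fun x => by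
    rw [eq_comm, ← Perm.inv_eq_iff_eq, hy', h.bin.act_act_inv, h.bin.act_inv_act]
  have hyy' : y = y' := by
    have hw' := hw
    rw [ht', h.semitrans.1, hy] at hw'
    refine h.eq_of_act_inv_act_eq_self (inv_ne_one.mpr hg) (z := w) ?_
    apply h.bin.act_injective g⁻¹ w
    rw [inv_inv, hw', h.semitrans.1]
  ext x
  rw [Perm.mul_apply, ht', hy, ← hyy', h.bin.act_act_inv, h.bin.act_inv_act, Perm.one_apply]

variable [Nontrivial G]

def translationSubgroup : Subgroup (Perm X) where
  carrier := {f | f ∈ autSubgroup a ∧ ∀ z, f z = z → f = 1}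
  one_mem' := ⟨one_mem _, fun _ _ => rfl⟩
  mul_mem' := by
    rintro s t ⟨hs, hsfix⟩ ⟨ht, htfix⟩
    refine ⟨mul_mem hs ht, fun w hw => ?_⟩
    by_cases hsfree : ∃ z, s z = z
    · obtain ⟨z, hz⟩ := hsfree
      rw [hsfix z hz, one_mul] at hw ⊢
      exact htfix w hw
    by_cases htfree : ∃ z, t z = z
    · obtain ⟨z, hz⟩ := htfree
      rw [htfix z hz, mul_one] at hw ⊢
      exact hsfix w hw
    push Not at hsfree htfree
    exact h.mul_eq_one_of_fixedPointFree hs ht hsfree htfree hw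
  inv_mem' := by
    rintro f ⟨hf, hffix⟩
    refine ⟨inv_mem hf, fun z hz => ?_⟩
    rw [hffix z (Perm.inv_eq_iff_eq.mp hz).symm, inv_one]

theorem conj_mem_translationSubgroup {c f : Perm X} (hc : c ∈ autSubgroup a)
    (hf : f ∈ h.translationSubgroup) : c * f * c⁻¹ ∈ h.translationSubgroup := by
  obtain ⟨hf, hffix⟩ := hf
  refine ⟨mul_mem (mul_mem hc hf) (inv_mem hc), fun z hz => ?_⟩
  rw [hffix _ (Perm.eq_inv_iff_eq.mpr hz), mul_one, mul_inv_cancel]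

theorem eq_of_mem_translationSubgroup {f f' : Perm X} (hf : f ∈ h.translationSubgroup)
    (hf' : f' ∈ h.translationSubgroup) {o : X} (hff' : f o = f' o) : f = f' := by
  refine inv_mul_eq_one.mp ((mul_mem (inv_mem hf) hf').2 o ?_)
  rw [Perm.mul_apply, ← hff']
  exact f.symm_apply_apply o

theorem exists_mem_translationSubgroup_apply_eq (o x : X) :
    ∃ f ∈ h.translationSubgroup, f o = x := by
  obtain ⟨g, hg⟩ := exists_ne (1 : G)
  obtain ⟨p, hp⟩ := (h.act_center_bijective hg o).2 (a g o x)
  dsimp only at hp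
  have hP := h.distrib.perm_mem_autSubgroup h.bin
  refine ⟨h.bin.perm g⁻¹ o * h.bin.perm g p,
    ⟨mul_mem (hP _ _) (hP _ _), fun z hz => ?_⟩, ?_⟩
  · have hpo : o = p := h.eq_of_act_inv_act_eq_self hg hz
    ext y
    simp [hpo, h.bin.act_inv_act]
  · simp only [Perm.mul_apply, IsBinAct.perm_apply]
    rw [hp, h.bin.act_inv_act]

theorem exists_withZero_equiv {o e : X} (hoe : o ≠ e) :
    ∃ ψ : WithZero G ≃ h.translationSubgroup, ψ 0 = 1 ∧
      ∀ (g : G) x, (ψ (g * x) : Perm X) = h.bin.perm g o * ψ x * (h.bin.perm g o)⁻¹ := by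
  let θ : WithZero G → X := fun x => WithZero.recZeroCoe o (fun g => a g o e) x
  have θ_mul : ∀ (g : G) x, θ (g * x) = a g o (θ x) := by
    intro g x
    cases x with
    | zero => simp [θ, h.semitrans.1]
    | coe k => simp [θ, ← WithZero.coe_mul, h.bin.1]
  have θ_bij : Function.Bijective θ := by
    constructor
    · intro x y hxy
      cases x <;> cases y <;>
        simp only [θ, WithZero.recZeroCoe_zero, WithZero.recZeroCoe_coe] at hxy
      · rfl
      · exact absurd hxy.symm (h.semitrans.act_ne _ hoe)
      · exact absurd hxy (h.semitrans.act_ne _ hoe)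
      · rw [h.eq_of_act_eq hoe hxy]
    · intro x
      by_cases hx : x = o
      · exact ⟨0, hx.symm⟩
      obtain ⟨g, hg⟩ := h.semitrans.exists_act_eq hoe hx
      exact ⟨g, hg⟩
  let ev : h.translationSubgroup → X := fun f => (f : Perm X) o
  have ev_bij : Function.Bijective ev := by
    refine ⟨fun f f' hff' => Subtype.ext (h.eq_of_mem_translationSubgroup f.2 f'.2 hff'),
      fun x => ?_⟩
    obtain ⟨f, hf, hfo⟩ := h.exists_mem_translationSubgroup_apply_eq o x
    exact ⟨⟨f, hf⟩, hfo⟩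
  let ψ := (Equiv.ofBijective θ θ_bij).trans (Equiv.ofBijective ev ev_bij).symm
  have hψ : ∀ x, (ψ x : Perm X) o = θ x :=
    fun x => (Equiv.ofBijective ev ev_bij).apply_symm_apply (θ x)
  refine ⟨ψ, Subtype.ext (h.eq_of_mem_translationSubgroup (ψ 0).2 (one_mem _) (hψ 0)),
    fun g x => ?_⟩
  have hc := h.conj_mem_translationSubgroup (h.distrib.perm_mem_autSubgroup h.bin g o) (ψ x).2
  refine h.eq_of_mem_translationSubgroup (o := o) (ψ _).2 hc ?_
  rw [Perm.mul_apply, Perm.mul_apply, IsBinAct.perm_inv_apply, h.semitrans.1,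
    IsBinAct.perm_apply, hψ, hψ, θ_mul]

end IsAffineBinAct

/-- `hψ` is left distributivity for the addition `x + y = ψ.symm (ψ x * ψ y)`. -/
theorem exists_field_of_withZero_equiv {G T : Type u} [CommGroup G] [Group T]
    (ψ : WithZero G ≃ T) (hψ0 : ψ 0 = 1)
    (hψ : ∀ (g : G) (x y : WithZero G),
      ψ (g * ψ.symm (ψ x * ψ y)) = ψ (g * x) * ψ (g * y)) :
    ∃ (F : Type u) (_ : Field F), Nonempty (G ≃* Fˣ) := by
  let _ : Add (WithZero G) := ⟨fun x y => ψ.symm (ψ x * ψ y)⟩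
  let _ : Neg (WithZero G) := ⟨fun x => ψ.symm (ψ x)⁻¹⟩
  have hadd : ∀ x y : WithZero G, ψ (x + y) = ψ x * ψ y := fun x y => ψ.apply_symm_apply _
  have hneg : ∀ x : WithZero G, ψ (-x) = (ψ x)⁻¹ := fun x => ψ.apply_symm_apply _
  let F : Field (WithZero G) := Field.ofMinimalAxioms (WithZero G)
    (fun x y z => ψ.injective (by simp only [hadd, mul_assoc]))
    (fun x => ψ.injective (by rw [hadd, hψ0, one_mul]))
    (fun x => ψ.injective (by rw [hadd, hneg, hψ0, inv_mul_cancel]))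
    mul_assoc mul_comm one_mul (fun x hx => mul_inv_cancel₀ hx) inv_zero
    (fun x y z => by
      cases x with
      | zero => exact ψ.injective (by rw [zero_mul, zero_mul, zero_mul, hadd, hψ0, one_mul])
      | coe g => exact ψ.injective (by rw [hadd]; exact hψ g y z))
    ⟨0, 1, zero_ne_one⟩
  refine ⟨WithZero G, F, ⟨?_⟩⟩
  exact
    { toFun := fun g => ⟨g, (g⁻¹ : G), by rw [← WithZero.coe_mul, mul_inv_cancel]; rfl,
        by rw [← WithZero.coe_mul, inv_mul_cancel]; rfl⟩
      invFun := fun u =>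
        WithZero.unzero (x := (u : WithZero G)) fun h0 => by simpa [h0] using u.val_inv
      left_inv := fun g => by simp
      right_inv := fun u => Units.ext (by simp)
      map_mul' := fun g k => Units.ext (WithZero.coe_mul g k) }

theorem exists_field_of_subsingleton (G : Type u) [Group G] [Subsingleton G] :
    ∃ (F : Type u) (_ : Field F), Nonempty (G ≃* Fˣ) := by
  let _ := uniqueOfSubsingleton (1 : G)
  exact ⟨ULift (ZMod 2), inferInstance,
    ⟨MulEquiv.ofUnique.trans (Units.mapEquiv MulEquiv.ulift).symm⟩⟩

theorem IsAffineBinAct.exists_field {G X : Type u} [Group G] {a : G → X → X → X}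
    (h : IsAffineBinAct a) [Nontrivial X] [Nontrivial G] :
    ∃ (F : Type u) (_ : Field F), Nonempty (G ≃* Fˣ) := by
  obtain ⟨o, e, hoe⟩ := exists_pair_ne X
  obtain ⟨ψ, hψ0, hψ⟩ := h.exists_withZero_equiv hoe
  let _ : CommGroup G := { ‹Group G› with mul_comm := h.mul_comm }
  refine exists_field_of_withZero_equiv ψ hψ0 fun g x y => Subtype.ext ?_
  rw [Subgroup.coe_mul, hψ, hψ, hψ, Equiv.apply_symm_apply, Subgroup.coe_mul]
  group

theorem IsAffineBinAct.of_mulEquiv {G F : Type*} [Group G] [Field F] (i : G ≃* Fˣ) :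
    IsAffineBinAct (fun g (x y : F) => x + i g * (y - x)) where
  bin := ⟨fun g k x y => by simp only [map_mul, Units.val_mul, add_sub_cancel_left]; ring,
    fun x y => by simp⟩
  effective g hg := by
    have h01 := hg 0 1
    simp only [sub_zero, mul_one, zero_add] at h01
    exact i.injective ((Units.ext h01).trans (map_one i).symm)
  distrib g k x y z := by ring
  semitrans := by
    refine ⟨fun g x => by simp, fun x y hxy => Set.ext fun z => ⟨?_, fun hz => ?_⟩⟩
    · rintro ⟨g, rfl⟩ (hgx : x + i g * (y - x) = x)
      have : (i g : F) * (y - x) = 0 := by linear_combination hgx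
      exact hxy (sub_eq_zero.mp ((mul_eq_zero.mp this).resolve_left (i g).ne_zero)).symm
    · have hyx : y - x ≠ 0 := sub_ne_zero.2 (Ne.symm hxy)
      refine ⟨i.symm (Units.mk0 ((z - x) / (y - x)) (div_ne_zero (sub_ne_zero.2 hz) hyx)), ?_⟩
      simp only [MulEquiv.apply_symm_apply, Units.val_mk0]
      field_simp
      ring

/-- A group `G` is the multiplicative group of some field iff it admits an effective
semitransitive distributive binary action on a set with at least two points. -/
theorem mul_group_of_field_iff_semitransitive_distributive_action
    (G : Type u) [Group G] :
    (∃ (F : Type u) (_ : Field F), Nonempty (G ≃* Fˣ)) ↔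
      ∃ (X : Type u) (a : G → X → X → X),
        Nontrivial X ∧ IsBinAct a ∧ IsEffectiveAct a ∧
        IsDistribAct a ∧ IsSemitransAct a := by
  constructor
  · rintro ⟨F, _, ⟨i⟩⟩
    have h := IsAffineBinAct.of_mulEquiv i
    exact ⟨F, _, inferInstance, h.bin, h.effective, h.distrib, h.semitrans⟩
  · rintro ⟨X, a, _, hB, hE, hD, hS⟩
    rcases subsingleton_or_nontrivial G with _ | _
    · exact exists_field_of_subsingleton G
    · exact IsAffineBinAct.exists_field ⟨hB, hE, hD, hS⟩
end

section
/- In an effective semitransitive distributive binary G-space X, if the addition on X is defined by x + y = s(s̃(x,0), s⁻¹(0,y)) for a fixed s ∈ G and basepoint 0 ∈ X (where s̃ is the left inverse of s), then every g ∈ G satisfies g(x + y, z + t) = g(x,z) + g(y,t) for all x, y, z, t ∈ X. -/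
/-- Auxiliary context bundling all hypotheses plus nontriviality. -/
structure ActCtx (G X : Type*) [Group G] where
  a : G → X → X → X
  hmul : ∀ (g h : G) (x y : X), a (g * h) x y = a g x (a h x y)
  hone : ∀ (x y : X), a 1 x y = y
  hdist : ∀ (g h : G) (x y z : X), a g x (a h y z) = a h (a g x y) (a g x z)
  hfix : ∀ (g : G) (x : X), a g x x = x
  htrans : ∀ x y : X, x ≠ y → Set.range (fun g => a g x y) = {x}ᶜ
  zero : X
  s : G
  st : G
  hst : ∀ x y : X, a s (a st y x) x = y
  p₁ : X
  p₂ : X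
  hnep : p₁ ≠ p₂

namespace ActCtx

variable {G X : Type*} [Group G] (C : ActCtx G X)

lemma ainv (k : G) (c v : X) : C.a k c (C.a k⁻¹ c v) = v := by
  rw [← C.hmul, mul_inv_cancel, C.hone]

lemma ainv' (k : G) (c v : X) : C.a k⁻¹ c (C.a k c v) = v := by
  rw [← C.hmul, inv_mul_cancel, C.hone]

/-- Maps with the same basepoint commute. -/
lemma L1 (p r : G) (c v : X) : C.a p c (C.a r c v) = C.a r c (C.a p c v) := by
  rw [C.hdist p r c c v, C.hfix]

lemma exmap {c w u : X} (hcw : c ≠ w) (huc : u ≠ c) : ∃ k : G, C.a k c w = u := by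
  have h := C.htrans c w hcw
  have h2 : u ∈ ({c}ᶜ : Set X) := by simpa using huc
  rw [← h] at h2
  exact h2

lemma exne (C : ActCtx G X) (b : X) : ∃ w : X, w ≠ b := by
  by_cases hb : b = C.p₁
  · exact ⟨C.p₂, by rw [hb]; exact fun hh => C.hnep hh.symm⟩
  · exact ⟨C.p₁, fun hh => hb hh.symm⟩

/-- Varying-base lemma: the map `y ↦ st(y, b)` is a stabilizer map at `b`. -/
lemma VB (b : X) : ∃ h : G, ∀ y : X, C.a C.st y b = C.a h b y := by
  obtain ⟨w₀, hw₀⟩ := C.exne b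
  have hd0b : C.a C.st w₀ b ≠ b := by
    intro hh
    have h1 := C.hst b w₀
    rw [hh, C.hfix] at h1
    exact hw₀ h1.symm
  obtain ⟨h, hh⟩ := C.exmap (Ne.symm hw₀) hd0b
  refine ⟨h, ?_⟩
  intro y
  by_cases hyb : y = b
  · rw [hyb, C.hfix, C.hfix]
  · obtain ⟨k, hk⟩ := C.exmap (Ne.symm hw₀) hyb
    calc C.a C.st y b = C.a C.st (C.a k b w₀) (C.a k b b) := by rw [hk, C.hfix]
      _ = C.a k b (C.a C.st w₀ b) := (C.hdist k C.st b w₀ b).symm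
      _ = C.a k b (C.a h b w₀) := by rw [hh]
      _ = C.a h b (C.a k b w₀) := C.L1 k h b w₀
      _ = C.a h b y := by rw [hk]

/-- Both `st(·, b)` and `s(·, b)` (varying first slot) are stabilizer maps at `b`. -/
lemma FB (b : X) : ∃ h : G, (∀ y : X, C.a C.st y b = C.a h b y) ∧
    (∀ p : X, C.a C.s p b = C.a h⁻¹ b p) := by
  obtain ⟨h, hh⟩ := C.VB b
  refine ⟨h, hh, fun p => ?_⟩
  have h1 : ∀ y : X, C.a C.s (C.a h b y) b = y := by
    intro y
    have h2 := C.hst b y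
    rwa [hh y] at h2
  have h2 := h1 (C.a h⁻¹ b p)
  rwa [C.ainv h b p] at h2

def q (c : X) : X := C.a C.st c C.zero
def add (c d : X) : X := C.a C.s (C.q c) (C.a C.s⁻¹ C.zero d)
def tinv (c w : X) : X := C.a C.s C.zero (C.a C.s⁻¹ (C.q c) w)
def neg (c : X) : X := C.tinv c C.zero

lemma q_def (c : X) : C.q c = C.a C.st c C.zero := rfl
lemma add_def (c d : X) : C.add c d = C.a C.s (C.q c) (C.a C.s⁻¹ C.zero d) := rfl
lemma tinv_def (c w : X) : C.tinv c w = C.a C.s C.zero (C.a C.s⁻¹ (C.q c) w) := rfl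
lemma neg_def (c : X) : C.neg c = C.tinv c C.zero := rfl

lemma sq0 (c : X) : C.a C.s (C.q c) C.zero = c := C.hst C.zero c

lemma qzero : C.q C.zero = C.zero := C.hfix _ _

lemma add_zero' (c : X) : C.add c C.zero = c := by
  rw [C.add_def, C.hfix]
  exact C.sq0 c

lemma zero_add' (d : X) : C.add C.zero d = d := by
  rw [C.add_def, C.qzero]
  exact C.ainv C.s C.zero d

lemma tinv_tau (c w : X) : C.tinv c (C.add c w) = w := by
  rw [C.tinv_def, C.add_def, C.ainv' C.s (C.q c)]
  exact C.ainv C.s C.zero w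

lemma tau_tinv (c w : X) : C.add c (C.tinv c w) = w := by
  rw [C.add_def, C.tinv_def, C.ainv' C.s C.zero]
  exact C.ainv C.s (C.q c) w

lemma tinv_self (e : X) : C.tinv e e = C.zero := by
  have h := C.tinv_tau e C.zero
  rwa [C.add_zero'] at h

lemma add_neg (c : X) : C.add c (C.neg c) = C.zero := C.tau_tinv c C.zero

/-- Quasi-equivariance of right addition. -/
lemma add_qe (c : X) (k : G) (e v : X) :
    C.add c (C.a k e v) = C.a k (C.add c e) (C.add c v) := by
  rw [C.add_def, C.hdist C.s⁻¹ k C.zero e v, C.hdist C.s k (C.q c)]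
  rfl

lemma tinv_qe (c : X) (k : G) (e v : X) :
    C.tinv c (C.a k e v) = C.a k (C.tinv c e) (C.tinv c v) := by
  rw [C.tinv_def, C.hdist C.s⁻¹ k (C.q c) e v, C.hdist C.s k C.zero]
  rfl

/-- Quasi-equivariance of left addition. -/
lemma addl_qe (d : X) (k : G) (e v : X) :
    C.add (C.a k e v) d = C.a k (C.add e d) (C.add v d) := by
  obtain ⟨h0, hq0, _⟩ := C.FB C.zero
  obtain ⟨h1, _, hF⟩ := C.FB (C.a C.s⁻¹ C.zero d)
  have rep : ∀ y : X, C.add y d =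
      C.a h1⁻¹ (C.a C.s⁻¹ C.zero d) (C.a h0 C.zero y) := by
    intro y
    rw [C.add_def, hF (C.q y), C.q_def, hq0 y]
  rw [rep (C.a k e v), rep e, rep v, C.hdist h0 k C.zero e v,
    C.hdist h1⁻¹ k (C.a C.s⁻¹ C.zero d)]

/-- A quasi-equivariant map with two fixed points is the identity. -/
lemma twofp (D : X → X) (hqe : ∀ (k : G) (c v : X), D (C.a k c v) = C.a k (D c) (D v))
    {p r : X} (hp : D p = p) (hr : D r = r) (hpr : p ≠ r) : ∀ u : X, D u = u := by
  intro u
  by_cases hu : u = p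
  · rw [hu, hp]
  · obtain ⟨k, hk⟩ := C.exmap hpr hu
    rw [← hk, hqe, hp, hr]

lemma add_comm' (d u : X) : C.add u d = C.add d u := by
  by_cases hd0 : d = C.zero
  · rw [hd0, C.add_zero', C.zero_add']
  · have hqe : ∀ (k : G) (c v : X),
        (fun w => C.tinv d (C.add w d)) (C.a k c v)
          = C.a k ((fun w => C.tinv d (C.add w d)) c)
              ((fun w => C.tinv d (C.add w d)) v) := by
      intro k c v
      show C.tinv d (C.add (C.a k c v) d) = _
      rw [C.addl_qe d k c v, C.tinv_qe d k]
    have hp : (fun w => C.tinv d (C.add w d)) C.zero = C.zero := by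
      show C.tinv d (C.add C.zero d) = C.zero
      rw [C.zero_add']
      have h := C.tinv_tau d C.zero
      rwa [C.add_zero'] at h
    have hr : (fun w => C.tinv d (C.add w d)) d = d := by
      show C.tinv d (C.add d d) = d
      exact C.tinv_tau d d
    have hD := C.twofp (fun w => C.tinv d (C.add w d)) hqe hp hr (fun hh => hd0 hh.symm)
    have h2 : C.tinv d (C.add u d) = u := hD u
    calc C.add u d = C.add d (C.tinv d (C.add u d)) := (C.tau_tinv d _).symm
      _ = C.add d u := by rw [h2]

lemma add_assoc' (c d w : X) : C.add c (C.add d w) = C.add (C.add c d) w := by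
  by_cases hc0 : c = C.zero
  · rw [hc0, C.zero_add', C.zero_add']
  · have hqe : ∀ (k : G) (e v : X),
        (fun u => C.tinv (C.add c d) (C.add c (C.add d u))) (C.a k e v)
          = C.a k ((fun u => C.tinv (C.add c d) (C.add c (C.add d u))) e)
              ((fun u => C.tinv (C.add c d) (C.add c (C.add d u))) v) := by
      intro k e v
      show C.tinv (C.add c d) (C.add c (C.add d (C.a k e v))) = _
      rw [C.add_qe d k e v, C.add_qe c k, C.tinv_qe (C.add c d) k]
    have hp : (fun u => C.tinv (C.add c d) (C.add c (C.add d u))) C.zero = C.zero := by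
      show C.tinv (C.add c d) (C.add c (C.add d C.zero)) = C.zero
      rw [C.add_zero' d]
      exact C.tinv_self _
    have hr : (fun u => C.tinv (C.add c d) (C.add c (C.add d u))) c = c := by
      show C.tinv (C.add c d) (C.add c (C.add d c)) = c
      rw [C.add_comm' c d, C.add_comm' (C.add c d) c]
      exact C.tinv_tau (C.add c d) c
    have hD := C.twofp (fun u => C.tinv (C.add c d) (C.add c (C.add d u))) hqe hp hr (fun hh => hc0 hh.symm)
    have h2 : C.tinv (C.add c d) (C.add c (C.add d w)) = w := hD w
    calc C.add c (C.add d w)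
        = C.add (C.add c d) (C.tinv (C.add c d) (C.add c (C.add d w))) :=
          (C.tau_tinv _ _).symm
      _ = C.add (C.add c d) w := by rw [h2]

lemma tinv_eq (c w : X) : C.tinv c w = C.add (C.neg c) w := by
  have h := C.tinv_tau c (C.add (C.neg c) w)
  rw [C.add_assoc' c (C.neg c) w, C.add_neg c, C.zero_add'] at h
  exact h

/-- Conjugation formula: `g(x+y, w) = x + g(y, -x + w)` (in `tinv` form). -/
lemma K1 (g : G) (x y w : X) :
    C.a g (C.add x y) w = C.add x (C.a g y (C.tinv x w)) := by
  have e1 : C.a C.s⁻¹ C.zero (C.tinv x w) = C.a C.s⁻¹ (C.q x) w := by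
    rw [C.tinv_def]
    exact C.ainv' C.s C.zero _
  have e2 : C.add x (C.a g y (C.tinv x w))
      = C.a C.s (C.q x) (C.a g (C.a C.s⁻¹ C.zero y) (C.a C.s⁻¹ (C.q x) w)) := by
    rw [C.add_def, C.hdist C.s⁻¹ g C.zero y (C.tinv x w), e1]
  rw [e2]
  have h2 := C.hdist C.s g (C.q x) (C.a C.s⁻¹ C.zero y) (C.a C.s⁻¹ (C.q x) w)
  rw [C.ainv C.s (C.q x) w] at h2
  exact h2.symm

lemma K2 (g : G) (y u : X) : C.a g y (C.add y u) = C.add y (C.a g C.zero u) := by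
  have h := C.K1 g y C.zero (C.add y u)
  rw [C.add_zero' y] at h
  rw [h, C.tinv_tau]

/-- Additivity of stabilizer maps at the basepoint. -/
lemma base_add (k : G) (c w : X) :
    C.a k C.zero (C.add c w) = C.add (C.a k C.zero c) (C.a k C.zero w) := by
  obtain ⟨h0, hq0, _⟩ := C.FB C.zero
  have hqc : C.a k C.zero (C.q c) = C.q (C.a k C.zero c) := by
    rw [C.q_def c, C.q_def (C.a k C.zero c), hq0 c, hq0 (C.a k C.zero c)]
    exact C.L1 k h0 C.zero c
  rw [C.add_def c w, C.add_def (C.a k C.zero c) (C.a k C.zero w),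
    C.hdist k C.s C.zero (C.q c) (C.a C.s⁻¹ C.zero w), hqc,
    C.hdist k C.s⁻¹ C.zero C.zero w, C.hfix]

lemma goal2 (g : G) (e : X) :
    C.a g e C.zero = C.add e (C.a g C.zero (C.neg e)) := by
  have h := C.K1 g e C.zero C.zero
  rw [C.add_zero' e] at h
  rw [h, C.neg_def]

lemma goal1 (g : G) (e u : X) :
    C.a g e u = C.add (C.a g e C.zero) (C.a g C.zero u) := by
  have h1 : C.a g e u = C.add e (C.a g C.zero (C.tinv e u)) := by
    have h := C.K1 g e C.zero u
    rwa [C.add_zero' e] at h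
  rw [h1, C.tinv_eq e u, C.base_add g (C.neg e) u,
    C.add_assoc' e (C.a g C.zero (C.neg e)) (C.a g C.zero u), ← C.goal2 g e]

lemma goal0 (g : G) (e y t : X) :
    C.a g (C.add e y) t = C.add (C.a g e C.zero) (C.a g y t) := by
  have hu : t = C.add y (C.add (C.neg y) t) := by
    rw [C.add_assoc' y (C.neg y) t, C.add_neg y, C.zero_add']
  have l1 : C.a g (C.add e y) t = C.add y (C.a g e (C.add (C.neg y) t)) := by
    rw [C.add_comm' y e, C.K1 g y e t, C.tinv_eq y t]
  have r1 : C.a g y t = C.add y (C.a g C.zero (C.add (C.neg y) t)) := by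
    conv_lhs => rw [hu]
    rw [C.K2 g y (C.add (C.neg y) t)]
  rw [l1, r1, C.goal1 g e (C.add (C.neg y) t),
    C.add_assoc' y (C.a g e C.zero) (C.a g C.zero (C.add (C.neg y) t)),
    C.add_comm' (C.a g e C.zero) y,
    ← C.add_assoc' (C.a g e C.zero) y (C.a g C.zero (C.add (C.neg y) t))]

/-- The main additivity statement. -/
lemma main (g : G) (x y z t : X) :
    C.a g (C.add x y) (C.add z t) = C.add (C.a g x z) (C.a g y t) := by
  have hx : C.add z (C.add (C.neg z) x) = x := by
    rw [C.add_assoc' z (C.neg z) x, C.add_neg z, C.zero_add']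
  have r1 : C.a g x z = C.add z (C.a g (C.add (C.neg z) x) C.zero) := by
    conv_lhs => rw [← hx]
    rw [C.K1 g z (C.add (C.neg z) x) z, C.tinv_self z]
  have l1 : C.a g (C.add x y) (C.add z t)
      = C.add z (C.a g (C.add (C.add (C.neg z) x) y) t) := by
    conv_lhs => rw [← hx]
    rw [← C.add_assoc' z (C.add (C.neg z) x) y,
      C.K1 g z (C.add (C.add (C.neg z) x) y) (C.add z t), C.tinv_tau z t]
  rw [l1, r1, C.goal0 g (C.add (C.neg z) x) y t]
  exact C.add_assoc' z (C.a g (C.add (C.neg z) x) C.zero) (C.a g y t)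

end ActCtx

/-- With addition `x + y = s(s̃(x,0), s⁻¹(0,y))` defined from a fixed `s ∈ G`, basepoint
`0 ∈ X` and the left inverse `s̃` of `s`, every `g ∈ G` satisfies
`g(x + y, z + t) = g(x,z) + g(y,t)`. -/
theorem action_additive (G X : Type*) [Group G]
    (a : G → X → X → X) (ha : IsBinAct a) (he : IsEffectiveAct a)
    (hd : IsDistribAct a) (hs : IsSemitransAct a)
    (zero : X) (s st : G) (hst : ∀ x y : X, a s (a st y x) x = y) :
    ∀ (g : G) (x y z t : X),
      a g (a s (a st x zero) (a s⁻¹ zero y)) (a s (a st z zero) (a s⁻¹ zero t)) =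
        a s (a st (a g x z) zero) (a s⁻¹ zero (a g y t)) := by
  intro g x y z t
  by_cases hsub : ∀ u v : X, u = v
  · exact hsub _ _
  · push_neg at hsub
    obtain ⟨x₁, x₂, h12⟩ := hsub
    exact ActCtx.main ⟨a, ha.1, ha.2, hd, hs.1, hs.2, zero, s, st, hst, x₁, x₂, h12⟩ g x y z t
end
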